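/- Both distributions (the horizontal and the vertical distribution, i.e. the +1- and −1-eigendistributions of J) of the almost product Riemannian manifold (T*M, J, CG g_f) are totally geodesic. -/

import Mathlib

open scoped BigOperators

namespace CGCot

noncomputable section

/-- A point of the cotangent bundle `T*ℝⁿ ≃ ℝⁿ × ℝⁿ` (single-chart model):
base coordinates `x = q.1` and fibre coordinates `p = q.2`. -/
abbrev Pt (n : ℕ) : Type := (Fin n → ℝ) × (Fin n → ℝ)

/-- A tangent vector to the cotangent bundle, split into its components along
`∂/∂xⁱ` (first factor) and `∂/∂pᵢ` (second factor). -/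
abbrev Vec (n : ℕ) : Type := (Fin n → ℝ) × (Fin n → ℝ)

/-- Vector fields on the cotangent bundle. -/
abbrev VectorField (n : ℕ) : Type := Pt n → Vec n

/-- A (0,2)-tensor field (e.g. a pseudo-Riemannian metric) on the cotangent bundle,
given pointwise on tangent vectors. -/
abbrev Met (n : ℕ) : Type := Pt n → Vec n → Vec n → ℝ

/-- Partial derivative `∂ᵢF` of a function on the base. -/
def pd (n : ℕ) (F : (Fin n → ℝ) → ℝ) (i : Fin n) (x : Fin n → ℝ) : ℝ :=
  fderiv ℝ F x (Pi.single i 1)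

/-- Components `g^{ij}` of the inverse metric. -/
def ginv (n : ℕ) (g : (Fin n → ℝ) → Fin n → Fin n → ℝ) (x : Fin n → ℝ) (i j : Fin n) : ℝ :=
  (Matrix.of (g x))⁻¹ i j

/-- Christoffel symbols `Γ^h_{ij}` of the Levi-Civita connection of `g`. -/
def Chr (n : ℕ) (g : (Fin n → ℝ) → Fin n → Fin n → ℝ) (x : Fin n → ℝ) (h i j : Fin n) : ℝ :=
  (1 / 2) * ∑ k, ginv n g x h k *
    (pd n (fun y => g y k j) i x + pd n (fun y => g y k i) j x - pd n (fun y => g y i j) k x)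

/-- Curvature components `R_{ijl}{}^s` of `g`, i.e. `R(∂ᵢ,∂ⱼ)∂ₗ = R_{ijl}{}^s ∂ₛ`
for `R(X,Y) = [∇_X,∇_Y] - ∇_{[X,Y]}`. -/
def Riem (n : ℕ) (g : (Fin n → ℝ) → Fin n → Fin n → ℝ) (x : Fin n → ℝ) (i j l s : Fin n) : ℝ :=
  pd n (fun y => Chr n g y s j l) i x - pd n (fun y => Chr n g y s i l) j x
    + ∑ k, (Chr n g x s i k * Chr n g x k j l - Chr n g x s j k * Chr n g x k i l)

/-- The base manifold `(M,g)` is flat: its curvature tensor vanishes identically. -/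
def IsFlatBase (n : ℕ) (g : (Fin n → ℝ) → Fin n → Fin n → ℝ) : Prop :=
  ∀ (x : Fin n → ℝ) (i j l s : Fin n), Riem n g x i j l s = 0

/-- `R_.{}^{k}{}_{j}{}_.{}^{is} = g^{kt} g^{im} R_{tjm}{}^{s}`. -/
def Rup (n : ℕ) (g : (Fin n → ℝ) → Fin n → Fin n → ℝ) (x : Fin n → ℝ) (k j i s : Fin n) : ℝ :=
  ∑ t, ∑ m, ginv n g x k t * ginv n g x i m * Riem n g x t j m s

/-- The horizontal vectors `E_j = ∂/∂xʲ + p_a Γ^a_{hj} ∂/∂p_h` of the adapted frame. -/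
def E (n : ℕ) (g : (Fin n → ℝ) → Fin n → Fin n → ℝ) (j : Fin n) : VectorField n := fun q =>
  (Pi.single j 1, fun h => ∑ a, q.2 a * Chr n g q.1 a h j)

/-- The vertical vectors `E_j̄ = ∂/∂p_j` of the adapted frame. -/
def Ebar (n : ℕ) (j : Fin n) : VectorField n := fun _ => (0, Pi.single j 1)

/-- The Lie bracket of vector fields on the cotangent bundle. -/
def bracket (n : ℕ) (X Y : VectorField n) : VectorField n := fun q =>
  fderiv ℝ Y q (X q) - fderiv ℝ X q (Y q)

/-- Horizontal lift of a (possibly fibre-dependent) vector field `Z`. -/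
def HLiftP (n : ℕ) (g : (Fin n → ℝ) → Fin n → Fin n → ℝ) (Z : Pt n → Fin n → ℝ) :
    VectorField n := fun q =>
  (Z q, fun h => ∑ a, ∑ j, q.2 a * Chr n g q.1 a h j * Z q j)

/-- Horizontal lift `^H X` of a vector field `X` on the base. -/
def HLift (n : ℕ) (g : (Fin n → ℝ) → Fin n → Fin n → ℝ) (X : (Fin n → ℝ) → Fin n → ℝ) :
    VectorField n :=
  HLiftP n g fun q => X q.1

/-- Vertical lift of a (possibly fibre-dependent) 1-form. -/
def VLiftP (n : ℕ) (ω : Pt n → Fin n → ℝ) : VectorField n := fun q => (0, ω q)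

/-- Vertical lift `^V ω` of a 1-form `ω` on the base. -/
def VLift (n : ℕ) (ω : (Fin n → ℝ) → Fin n → ℝ) : VectorField n := fun q => (0, ω q.1)

/-- `α = 1 + r²` where `r² = g^{ij} pᵢ pⱼ`. -/
def alpha (n : ℕ) (g : (Fin n → ℝ) → Fin n → Fin n → ℝ) (q : Pt n) : ℝ :=
  1 + ∑ i, ∑ j, ginv n g q.1 i j * q.2 i * q.2 j

/-- `p^i = g^{it} p_t`. -/
def pup (n : ℕ) (g : (Fin n → ℝ) → Fin n → Fin n → ℝ) (q : Pt n) (i : Fin n) : ℝ :=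
  ∑ t, ginv n g q.1 i t * q.2 t

/-- The vertical part of a tangent vector `u` at `q` (the components of the unique 1-form
`ω` such that `u = ^H X + ^V ω` with `X = u.1`). -/
def vert (n : ℕ) (g : (Fin n → ℝ) → Fin n → Fin n → ℝ) (q : Pt n) (u : Vec n) (h : Fin n) : ℝ :=
  u.2 h - ∑ a, ∑ j, q.2 a * Chr n g q.1 a h j * u.1 j

/-- The rescaled Cheeger-Gromoll type metric `^{CG}g_f` on the cotangent bundle:
`^{CG}g_f(^Vω,^Vθ) = (1/α)(g⁻¹(ω,θ) + g⁻¹(ω,p) g⁻¹(θ,p))`, `^{CG}g_f(^Vω,^HY) = 0`,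
`^{CG}g_f(^HX,^HY) = f g(X,Y)`. -/
def CGmetric (n : ℕ) (g : (Fin n → ℝ) → Fin n → Fin n → ℝ) (f : (Fin n → ℝ) → ℝ) :
    Met n := fun q u v =>
  f q.1 * (∑ i, ∑ j, g q.1 i j * u.1 i * v.1 j)
    + (1 / alpha n g q) *
      ((∑ i, ∑ j, ginv n g q.1 i j * vert n g q u i * vert n g q v j)
        + (∑ i, ∑ j, ginv n g q.1 i j * vert n g q u i * q.2 j)
          * (∑ i, ∑ j, ginv n g q.1 i j * vert n g q v i * q.2 j))

/-- The tensor `{}^f A^h_{ij} = (1/f)(f_i δ^h_j + f_j δ^h_i - f^m g_{ij})`. -/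
def Af (n : ℕ) (g : (Fin n → ℝ) → Fin n → Fin n → ℝ) (f : (Fin n → ℝ) → ℝ)
    (x : Fin n → ℝ) (h i j : Fin n) : ℝ :=
  (1 / f x) * (pd n f i x * (if h = j then (1:ℝ) else 0)
    + pd n f j x * (if h = i then (1:ℝ) else 0)
    - (∑ k, ginv n g x h k * pd n f k x) * g x i j)

/-- `A(X,Y)` as a vector field on the base. -/
def ATens (n : ℕ) (g : (Fin n → ℝ) → Fin n → Fin n → ℝ) (f : (Fin n → ℝ) → ℝ)
    (X Y : (Fin n → ℝ) → Fin n → ℝ) (x : Fin n → ℝ) : Fin n → ℝ := fun h =>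
  ∑ i, ∑ j, Af n g f x h i j * X x i * Y x j

/-- Covariant derivative `∇_X Y` of vector fields on the base. -/
def covDerV (n : ℕ) (g : (Fin n → ℝ) → Fin n → Fin n → ℝ)
    (X Y : (Fin n → ℝ) → Fin n → ℝ) (x : Fin n → ℝ) : Fin n → ℝ := fun h =>
  (∑ i, X x i * pd n (fun y => Y y h) i x) + ∑ i, ∑ j, Chr n g x h i j * X x i * Y x j

/-- Covariant derivative `∇_X θ` of a 1-form on the base. -/
def covDer1 (n : ℕ) (g : (Fin n → ℝ) → Fin n → Fin n → ℝ)
    (X θ : (Fin n → ℝ) → Fin n → ℝ) (x : Fin n → ℝ) : Fin n → ℝ := fun l =>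
  (∑ i, X x i * pd n (fun y => θ y l) i x) - ∑ i, ∑ h, Chr n g x h i l * X x i * θ x h

/-- The 1-form `p ∘ R(X,Y)` with components `(p∘R(X,Y))_l = p_s R_{ijl}{}^s Xⁱ Yʲ`. -/
def pR (n : ℕ) (g : (Fin n → ℝ) → Fin n → Fin n → ℝ) (X Y : (Fin n → ℝ) → Fin n → ℝ)
    (q : Pt n) : Fin n → ℝ := fun l =>
  ∑ i, ∑ j, ∑ s, q.2 s * Riem n g q.1 i j l s * X q.1 i * Y q.1 j

/-- The (fibre-dependent) vector field `p(g⁻¹ ∘ R( · ,X) θ̃)` with components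
`p_s R_.{}^l{}_i{}_.{}^{js} Xⁱ θⱼ`. -/
def PRX (n : ℕ) (g : (Fin n → ℝ) → Fin n → Fin n → ℝ) (X θ : (Fin n → ℝ) → Fin n → ℝ)
    (q : Pt n) : Fin n → ℝ := fun l =>
  ∑ i, ∑ j, ∑ s, q.2 s * Rup n g q.1 l i j s * X q.1 i * θ q.1 j

/-- The Liouville (canonical) vector field `γδ = p_i E_ī`. -/
def Liou (n : ℕ) : VectorField n := fun q => (0, q.2)

/-- The almost paracomplex structure `J` with `J(^HX) = -^HX`, `J(^Vω) = ^Vω`,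
as a pointwise endomorphism of tangent vectors. -/
def Jmap (n : ℕ) (g : (Fin n → ℝ) → Fin n → Fin n → ℝ) (q : Pt n) (u : Vec n) : Vec n :=
  (-u.1, fun h => u.2 h - 2 * ∑ a, ∑ j, q.2 a * Chr n g q.1 a h j * u.1 j)

/-- The diagonal lift `^D I` of the identity tensor field: `^D I(^HX) = ^HX`,
`^D I(^Vω) = -^Vω`, as a pointwise endomorphism of tangent vectors. -/
def DImap (n : ℕ) (g : (Fin n → ℝ) → Fin n → Fin n → ℝ) (q : Pt n) (u : Vec n) : Vec n :=
  (u.1, fun h => (2 * ∑ a, ∑ j, q.2 a * Chr n g q.1 a h j * u.1 j) - u.2 h)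

/-- `D` is the Levi-Civita connection of the metric `G` on the cotangent bundle:
it is tensorial in the lower argument, additive and Leibniz in the upper argument,
torsion-free and metric. -/
structure IsLeviCivita (n : ℕ) (G : Met n)
    (D : VectorField n → VectorField n → VectorField n) : Prop where
  add_left : ∀ X Y Z : VectorField n, D (X + Y) Z = D X Z + D Y Z
  smul_left : ∀ (h : Pt n → ℝ) (X Y : VectorField n),
    D (fun q => h q • X q) Y = fun q => h q • D X Y q
  add_right : ∀ X Y Z : VectorField n, ContDiff ℝ (⊤ : ℕ∞) Y → ContDiff ℝ (⊤ : ℕ∞) Z →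
    D X (Y + Z) = D X Y + D X Z
  leibniz : ∀ (h : Pt n → ℝ) (X Y : VectorField n),
    ContDiff ℝ (⊤ : ℕ∞) h → ContDiff ℝ (⊤ : ℕ∞) Y →
    D X (fun q => h q • Y q) = fun q => (fderiv ℝ h q (X q)) • Y q + h q • D X Y q
  torsion_free : ∀ X Y : VectorField n, (fun q => D X Y q - D Y X q) = bracket n X Y
  compat : ∀ X Y Z : VectorField n, ContDiff ℝ (⊤ : ℕ∞) Y → ContDiff ℝ (⊤ : ℕ∞) Z →
    ∀ q : Pt n, fderiv ℝ (fun q' => G q' (Y q') (Z q')) q (X q)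
      = G q (D X Y q) (Z q) + G q (Y q) (D X Z q)

/-- Curvature tensor `R̃(X,Y)Z = ∇̃_X ∇̃_Y Z - ∇̃_Y ∇̃_X Z - ∇̃_{[X,Y]} Z` of a connection. -/
def RT (n : ℕ) (D : VectorField n → VectorField n → VectorField n)
    (X Y Z : VectorField n) : VectorField n := fun q =>
  D X (D Y Z) q - D Y (D X Z) q - D (bracket n X Y) Z q

/-- The Lie derivative `(L_Y φ)X = [Y, φX] - φ[Y,X]` of a (1,1)-tensor field `φ`. -/
def LieT (n : ℕ) (T : Pt n → Vec n → Vec n) (Y X : VectorField n) : VectorField n := fun q =>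
  bracket n Y (fun q' => T q' (X q')) q - T q (bracket n Y X q)

/-- The Tachibana operator
`(Φ_φ ω)(X,Y,Z) = (φX)(ω(Y,Z)) - X(ω(φY,Z)) + ω((L_Y φ)X, Z) + ω(Y, (L_Z φ)X)`. -/
def Tach (n : ℕ) (G : Met n) (T : Pt n → Vec n → Vec n) (X Y Z : VectorField n) :
    Pt n → ℝ := fun q =>
  fderiv ℝ (fun q' => G q' (Y q') (Z q')) q (T q (X q))
    - fderiv ℝ (fun q' => G q' (T q' (Y q')) (Z q')) q (X q)
    + G q (LieT n T Y X q) (Z q) + G q (Y q) (LieT n T Z X q)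

/-- `(∇̃_X J)Y` for the paracomplex structure `J`. -/
def covJ (n : ℕ) (g : (Fin n → ℝ) → Fin n → Fin n → ℝ)
    (D : VectorField n → VectorField n → VectorField n) (X Y : VectorField n) :
    VectorField n := fun q =>
  D X (fun q' => Jmap n g q' (Y q')) q - Jmap n g q (D X Y q)

/-- `S̃(X,Y) = (1/2){(∇̃_{JY} J)X + J((∇̃_Y J)X) - J((∇̃_X J)Y)}`. -/
def Stilde (n : ℕ) (g : (Fin n → ℝ) → Fin n → Fin n → ℝ)
    (D : VectorField n → VectorField n → VectorField n) (X Y : VectorField n) :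
    VectorField n := fun q =>
  (1 / 2 : ℝ) • (covJ n g D (fun q' => Jmap n g q' (Y q')) X q
    + Jmap n g q (covJ n g D Y X q) - Jmap n g q (covJ n g D X Y q))

/-- The almost product connection `∇̄_X Y = ∇̃_X Y - S̃(X,Y)`. -/
def nablaBar (n : ℕ) (g : (Fin n → ℝ) → Fin n → Fin n → ℝ)
    (D : VectorField n → VectorField n → VectorField n) (X Y : VectorField n) :
    VectorField n := fun q =>
  D X Y q - Stilde n g D X Y q

/-- The torsion tensor `T̄(X,Y) = ∇̄_X Y - ∇̄_Y X - [X,Y]` of `∇̄`. -/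
def Tbar (n : ℕ) (g : (Fin n → ℝ) → Fin n → Fin n → ℝ)
    (D : VectorField n → VectorField n → VectorField n) (X Y : VectorField n) :
    VectorField n := fun q =>
  nablaBar n g D X Y q - nablaBar n g D Y X q - bracket n X Y q

/-- The Nijenhuis tensor of `J`:
`N(X,Y) = [JX,JY] - J[JX,Y] - J[X,JY] + J²[X,Y]` (here `J² = id`). -/
def Nij (n : ℕ) (g : (Fin n → ℝ) → Fin n → Fin n → ℝ) (X Y : VectorField n) :
    VectorField n := fun q =>
  bracket n (fun q' => Jmap n g q' (X q')) (fun q' => Jmap n g q' (Y q')) q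
    - Jmap n g q (bracket n (fun q' => Jmap n g q' (X q')) Y q)
    - Jmap n g q (bracket n X (fun q' => Jmap n g q' (Y q')) q)
    + bracket n X Y q

/-- The product conjugate connection `∇̃^{(J)}_X Y = J(∇̃_X (JY))`. -/
def Dconj (n : ℕ) (g : (Fin n → ℝ) → Fin n → Fin n → ℝ)
    (D : VectorField n → VectorField n → VectorField n) (X Y : VectorField n) :
    VectorField n := fun q =>
  Jmap n g q (D X (fun q' => Jmap n g q' (Y q')) q)



/-! ### Auxiliary machinery for the proof -/

section Aux

open scoped Matrix

variable {n : ℕ} {g : (Fin n → ℝ) → Fin n → Fin n → ℝ} {f : (Fin n → ℝ) → ℝ}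

private lemma cdiffAt {E F : Type*} [NormedAddCommGroup E] [NormedSpace ℝ E]
    [NormedAddCommGroup F] [NormedSpace ℝ F] {h : E → F}
    (hh : ContDiff ℝ (⊤ : ℕ∞) h) (z : E) : DifferentiableAt ℝ h z :=
  (hh.differentiable (by simp)).differentiableAt

/-! #### Sum contraction helpers -/

private lemma sum_delta_right (c : Fin n → ℝ) (j : Fin n) :
    ∑ a, c a * (if a = j then (1:ℝ) else 0) = c j := by
  simp [mul_ite]


private lemma swap_sum {M : Type*} [AddCommMonoid M] (F : Fin n → Fin n → M) :
    ∑ a, ∑ b, F a b = ∑ b, ∑ a, F a b := Finset.sum_comm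

private lemma sum_single (c : Fin n → ℝ) (l : Fin n) :
    ∑ j, c j * (Pi.single l 1 : Fin n → ℝ) j = c l := by
  simp [Pi.single_apply, mul_ite]

private lemma single_sum (c : Fin n → ℝ) (l : Fin n) :
    ∑ j, (Pi.single l 1 : Fin n → ℝ) j * c j = c l := by
  simp [Pi.single_apply, ite_mul]

/-! #### Smoothness of the basic data -/

private lemma cd_entry (hg : ContDiff ℝ (⊤ : ℕ∞) g) (i j : Fin n) :
    ContDiff ℝ (⊤ : ℕ∞) fun x => g x i j :=
  contDiff_pi.mp (contDiff_pi.mp hg i) j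

private lemma cd_pd {F : (Fin n → ℝ) → ℝ} (hF : ContDiff ℝ (⊤ : ℕ∞) F) (i : Fin n) :
    ContDiff ℝ (⊤ : ℕ∞) fun x => pd n F i x := by
  have h1 : ContDiff ℝ (⊤ : ℕ∞) (fderiv ℝ F) := hF.fderiv_right (by simp)
  simpa [pd] using h1.clm_apply (contDiff_const (c := Pi.single i (1:ℝ)))

private lemma cd_det {A : (Fin n → ℝ) → Matrix (Fin n) (Fin n) ℝ}
    (hA : ∀ i j, ContDiff ℝ (⊤ : ℕ∞) fun x => A x i j) :
    ContDiff ℝ (⊤ : ℕ∞) fun x => (A x).det := by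
  have e : (fun x => (A x).det)
      = fun x => ∑ σ : Equiv.Perm (Fin n), ((Equiv.Perm.sign σ : ℤ) : ℝ) * ∏ i, A x (σ i) i := by
    funext x
    rw [Matrix.det_apply]
    simp [Units.smul_def, zsmul_eq_mul]
  rw [e]
  exact ContDiff.sum fun σ _ => contDiff_const.mul (contDiff_prod fun i _ => hA (σ i) i)

private lemma cd_ginv (hg : ContDiff ℝ (⊤ : ℕ∞) g)
    (hgpos : ∀ x, (Matrix.of (g x)).PosDef) (i j : Fin n) :
    ContDiff ℝ (⊤ : ℕ∞) fun x => ginv n g x i j := by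
  have hdet : ContDiff ℝ (⊤ : ℕ∞) fun x => (Matrix.of (g x)).det :=
    cd_det fun a b => cd_entry hg a b
  have hne : ∀ x, (Matrix.of (g x)).det ≠ 0 := fun x => (hgpos x).det_pos.ne'
  have hadj : ContDiff ℝ (⊤ : ℕ∞) fun x => (Matrix.of (g x)).adjugate i j := by
    have e : (fun x => (Matrix.of (g x)).adjugate i j)
        = fun x => ((Matrix.of (g x)).updateRow j (Pi.single i 1)).det := by
      funext x; rw [Matrix.adjugate_apply]
    rw [e]
    refine cd_det fun a b => ?_
    rcases eq_or_ne a j with rfl | hne2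
    · simpa [Matrix.updateRow_apply] using (contDiff_const (c := (Pi.single i 1 : Fin n → ℝ) b))
    · simpa [Matrix.updateRow_apply, hne2] using cd_entry hg a b
  have e : (fun x => ginv n g x i j)
      = fun x => ((Matrix.of (g x)).det)⁻¹ * (Matrix.of (g x)).adjugate i j := by
    funext x
    rw [ginv, Matrix.inv_def]
    simp [Ring.inverse_eq_inv', smul_eq_mul]
  rw [e]
  exact (hdet.inv hne).mul hadj

private lemma cd_chr (hg : ContDiff ℝ (⊤ : ℕ∞) g)
    (hgpos : ∀ x, (Matrix.of (g x)).PosDef) (a h j : Fin n) :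
    ContDiff ℝ (⊤ : ℕ∞) fun x => Chr n g x a h j := by
  have e : (fun x => Chr n g x a h j)
      = fun x => (1 / 2 : ℝ) * ∑ k, ginv n g x a k *
          (pd n (fun y => g y k j) h x + pd n (fun y => g y k h) j x
            - pd n (fun y => g y h j) k x) := rfl
  rw [e]
  exact contDiff_const.mul (ContDiff.sum fun k _ =>
    (cd_ginv hg hgpos a k).mul
      (((cd_pd (cd_entry hg k j) h).add (cd_pd (cd_entry hg k h) j)).sub
        (cd_pd (cd_entry hg h j) k)))

/-! #### Matrix-inverse contraction identities -/

private lemma ginv_mul_g (hgpos : ∀ x, (Matrix.of (g x)).PosDef) (x : Fin n → ℝ) (i j : Fin n) :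
    ∑ a, ginv n g x i a * g x a j = if i = j then (1:ℝ) else 0 := by
  have h : (Matrix.of (g x))⁻¹ * Matrix.of (g x) = 1 :=
    Matrix.nonsing_inv_mul _ (isUnit_iff_ne_zero.mpr (hgpos x).det_pos.ne')
  have h2 : ((Matrix.of (g x))⁻¹ * Matrix.of (g x)) i j = (1 : Matrix (Fin n) (Fin n) ℝ) i j := by
    rw [h]
  simpa [Matrix.mul_apply, Matrix.one_apply, ginv] using h2

private lemma g_mul_ginv (hgpos : ∀ x, (Matrix.of (g x)).PosDef) (x : Fin n → ℝ) (i j : Fin n) :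
    ∑ a, g x i a * ginv n g x a j = if i = j then (1:ℝ) else 0 := by
  have h : Matrix.of (g x) * (Matrix.of (g x))⁻¹ = 1 :=
    Matrix.mul_nonsing_inv _ (isUnit_iff_ne_zero.mpr (hgpos x).det_pos.ne')
  have h2 : (Matrix.of (g x) * (Matrix.of (g x))⁻¹) i j = (1 : Matrix (Fin n) (Fin n) ℝ) i j := by
    rw [h]
  simpa [Matrix.mul_apply, Matrix.one_apply, ginv] using h2

private lemma ginv_symm (hgsymm : ∀ x i j, g x i j = g x j i) (x : Fin n → ℝ) (i j : Fin n) :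
    ginv n g x i j = ginv n g x j i := by
  have hsym : (Matrix.of (g x))ᵀ = Matrix.of (g x) := by
    ext a b
    simp [Matrix.transpose_apply, hgsymm x b a]
  have h2 : ((Matrix.of (g x))⁻¹)ᵀ = (Matrix.of (g x))⁻¹ := by
    rw [Matrix.transpose_nonsing_inv, hsym]
  have h3 : ((Matrix.of (g x))⁻¹)ᵀ j i = (Matrix.of (g x))⁻¹ j i := by rw [h2]
  simpa [ginv, Matrix.transpose_apply] using h3

/-! #### Calculus of `pd` -/

private lemma pd_congr {F G : (Fin n → ℝ) → ℝ} (h : ∀ y, F y = G y) (l : Fin n) (x : Fin n → ℝ) :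
    pd n F l x = pd n G l x := by rw [show F = G from funext h]

private lemma pd_const (c : ℝ) (l : Fin n) (x : Fin n → ℝ) : pd n (fun _ => c) l x = 0 := by
  simp [pd]

private lemma pd_sum {ι : Type*} (s : Finset ι) (A : ι → (Fin n → ℝ) → ℝ) (l : Fin n)
    (x : Fin n → ℝ) (hA : ∀ a ∈ s, DifferentiableAt ℝ (A a) x) :
    pd n (fun y => ∑ a ∈ s, A a y) l x = ∑ a ∈ s, pd n (A a) l x := by
  simp only [pd]
  rw [fderiv_fun_sum hA]
  simp

private lemma pd_mul {A B : (Fin n → ℝ) → ℝ} (l : Fin n) (x : Fin n → ℝ)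
    (hA : DifferentiableAt ℝ A x) (hB : DifferentiableAt ℝ B x) :
    pd n (fun y => A y * B y) l x = pd n A l x * B x + A x * pd n B l x := by
  simp only [pd]
  rw [fderiv_fun_mul hA hB]
  simp [smul_eq_mul]
  ring

private lemma chr_symm (hgsymm : ∀ x i j, g x i j = g x j i) (x : Fin n → ℝ) (h i j : Fin n) :
    Chr n g x h i j = Chr n g x h j i := by
  simp only [Chr]
  congr 1
  refine Finset.sum_congr rfl fun k _ => ?_
  rw [pd_congr (fun y => hgsymm y i j) k x]
  ring

private lemma pd_g_chr (hgsymm : ∀ x i j, g x i j = g x j i)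
    (hgpos : ∀ x, (Matrix.of (g x)).PosDef) (x : Fin n → ℝ) (l i j : Fin n) :
    pd n (fun y => g y i j) l x
      = ∑ a, (Chr n g x a l i * g x a j + Chr n g x a l j * g x i a) := by
  have contr : ∀ (P : Fin n → ℝ) (j' : Fin n),
      ∑ a, ((1 / 2 : ℝ) * ∑ k, ginv n g x a k * P k) * g x a j' = (1/2) * P j' := by
    intro P j'
    have e1 : ∀ a, ((1 / 2 : ℝ) * ∑ k, ginv n g x a k * P k) * g x a j'
        = ∑ k, (1/2) * P k * (ginv n g x k a * g x a j') := by
      intro a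
      rw [Finset.mul_sum, Finset.sum_mul]
      refine Finset.sum_congr rfl fun k _ => ?_
      rw [ginv_symm hgsymm x a k]
      ring
    rw [Finset.sum_congr rfl fun a _ => e1 a, swap_sum]
    have e2 : ∀ k, ∑ a, (1/2 : ℝ) * P k * (ginv n g x k a * g x a j')
        = (1/2) * P k * (if k = j' then (1:ℝ) else 0) := by
      intro k
      rw [← Finset.mul_sum, ginv_mul_g hgpos x k j']
    rw [Finset.sum_congr rfl fun k _ => e2 k]
    have := sum_delta_right (fun k => (1/2 : ℝ) * P k) j'
    simpa using this
  have e1 : ∑ a, Chr n g x a l i * g x a j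
      = (1/2) * (pd n (fun y => g y j i) l x + pd n (fun y => g y j l) i x
          - pd n (fun y => g y l i) j x) := by
    simp only [Chr]
    exact contr _ j
  have e2 : ∑ a, Chr n g x a l j * g x i a
      = (1/2) * (pd n (fun y => g y i j) l x + pd n (fun y => g y i l) j x
          - pd n (fun y => g y l j) i x) := by
    have hflip : ∀ a, Chr n g x a l j * g x i a = Chr n g x a l j * g x a i := by
      intro a; rw [hgsymm x i a]
    rw [Finset.sum_congr rfl fun a _ => hflip a]
    simp only [Chr]
    exact contr _ i
  rw [Finset.sum_add_distrib, e1, e2]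
  rw [pd_congr (fun y => hgsymm y j i) l x, pd_congr (fun y => hgsymm y j l) i x,
    pd_congr (fun y => hgsymm y i l) j x]
  rw [pd_congr (fun y => hgsymm y l j) i x, pd_congr (fun y => hgsymm y l i) j x]
  ring

private lemma pd_ginv (hg : ContDiff ℝ (⊤ : ℕ∞) g)
    (hgpos : ∀ x, (Matrix.of (g x)).PosDef) (x : Fin n → ℝ) (l i j : Fin n) :
    pd n (fun y => ginv n g y i j) l x
      = -∑ c, ∑ d, ginv n g x i c * pd n (fun y => g y c d) l x * ginv n g x d j := by
  have hgd : ∀ a b, DifferentiableAt ℝ (fun y => g y a b) x :=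
    fun a b => cdiffAt (cd_entry hg a b) x
  have hid : ∀ a b, DifferentiableAt ℝ (fun y => ginv n g y a b) x :=
    fun a b => cdiffAt (cd_ginv hg hgpos a b) x
  have hrow : ∀ b, ∑ a, (pd n (fun y => ginv n g y i a) l x * g x a b
      + ginv n g x i a * pd n (fun y => g y a b) l x) = 0 := by
    intro b
    have h0 : pd n (fun y => ∑ a, ginv n g y i a * g y a b) l x = 0 := by
      rw [pd_congr (fun y => ginv_mul_g hgpos y i b) l x, pd_const]
    have h1 : pd n (fun y => ∑ a, ginv n g y i a * g y a b) l x
        = ∑ a, (pd n (fun y => ginv n g y i a) l x * g x a b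
            + ginv n g x i a * pd n (fun y => g y a b) l x) := by
      rw [pd_sum _ _ l x (fun a _ => (hid i a).fun_mul (hgd a b))]
      exact Finset.sum_congr rfl fun a _ => pd_mul l x (hid i a) (hgd a b)
    rw [← h1, h0]
  have hrow' : ∀ b, ∑ a, pd n (fun y => ginv n g y i a) l x * g x a b
      = -∑ a, ginv n g x i a * pd n (fun y => g y a b) l x := by
    intro b
    have := hrow b
    rw [Finset.sum_add_distrib] at this
    linarith
  have main : pd n (fun y => ginv n g y i j) l x
      = ∑ b, (∑ a, pd n (fun y => ginv n g y i a) l x * g x a b) * ginv n g x b j := by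
    have e1 : ∑ b, (∑ a, pd n (fun y => ginv n g y i a) l x * g x a b) * ginv n g x b j
        = ∑ a, ∑ b, pd n (fun y => ginv n g y i a) l x * (g x a b * ginv n g x b j) := by
      simp only [Finset.sum_mul]
      rw [swap_sum]
      exact Finset.sum_congr rfl fun a _ => Finset.sum_congr rfl fun b _ => by ring
    rw [e1]
    have e2 : ∀ a, ∑ b, pd n (fun y => ginv n g y i a) l x * (g x a b * ginv n g x b j)
        = pd n (fun y => ginv n g y i a) l x * (if a = j then (1:ℝ) else 0) := by
      intro a
      rw [← Finset.mul_sum, g_mul_ginv hgpos x a j]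
    rw [Finset.sum_congr rfl fun a _ => e2 a, sum_delta_right]
  rw [main, Finset.sum_congr rfl fun b _ => by rw [hrow' b]]
  have e3 : ∑ b, (-∑ a, ginv n g x i a * pd n (fun y => g y a b) l x) * ginv n g x b j
      = -∑ b, ∑ a, ginv n g x i a * pd n (fun y => g y a b) l x * ginv n g x b j := by
    rw [← Finset.sum_neg_distrib]
    refine Finset.sum_congr rfl fun b _ => ?_
    rw [neg_mul, Finset.sum_mul]
  rw [e3, swap_sum]

/-- `∂ₗ g^{ij} = -(g^{ic} S^j_{lc} + S^i_{ld} g^{dj})`. -/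
private lemma pd_ginv_chr (hg : ContDiff ℝ (⊤ : ℕ∞) g) (hgsymm : ∀ x i j, g x i j = g x j i)
    (hgpos : ∀ x, (Matrix.of (g x)).PosDef) (x : Fin n → ℝ) (l i j : Fin n) :
    pd n (fun y => ginv n g y i j) l x
      = -((∑ c, ginv n g x i c * Chr n g x j l c) + ∑ d, Chr n g x i l d * ginv n g x d j) := by
  rw [pd_ginv hg hgpos x l i j]
  have e1 : ∀ c d, ginv n g x i c * pd n (fun y => g y c d) l x * ginv n g x d j
      = ∑ a, (ginv n g x i c * Chr n g x a l c * (g x a d * ginv n g x d j)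
          + (ginv n g x i c * g x c a) * (Chr n g x a l d * ginv n g x d j)) := by
    intro c d
    rw [pd_g_chr hgsymm hgpos x l c d, Finset.mul_sum, Finset.sum_mul]
    refine Finset.sum_congr rfl fun a _ => ?_
    ring
  rw [Finset.sum_congr rfl fun c _ => Finset.sum_congr rfl fun d _ => e1 c d]
  simp only [Finset.sum_add_distrib]
  have hP1 : ∑ c, ∑ d, ∑ a, ginv n g x i c * Chr n g x a l c * (g x a d * ginv n g x d j)
      = ∑ c, ginv n g x i c * Chr n g x j l c := by
    have e2 : ∀ c, ∑ d, ∑ a, ginv n g x i c * Chr n g x a l c * (g x a d * ginv n g x d j)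
        = ∑ a, ginv n g x i c * Chr n g x a l c * (if a = j then (1:ℝ) else 0) := by
      intro c
      rw [swap_sum]
      refine Finset.sum_congr rfl fun a _ => ?_
      rw [← Finset.mul_sum, g_mul_ginv hgpos x a j]
    rw [Finset.sum_congr rfl fun c _ => e2 c]
    refine Finset.sum_congr rfl fun c _ => ?_
    have := sum_delta_right (fun a => ginv n g x i c * Chr n g x a l c) j
    simpa using this
  have hP2 : ∑ c, ∑ d, ∑ a, (ginv n g x i c * g x c a) * (Chr n g x a l d * ginv n g x d j)
      = ∑ d, Chr n g x i l d * ginv n g x d j := by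
    have e2 : ∀ c, ∑ d, ∑ a, (ginv n g x i c * g x c a) * (Chr n g x a l d * ginv n g x d j)
        = ∑ a, (ginv n g x i c * g x c a) * ∑ d, Chr n g x a l d * ginv n g x d j := by
      intro c
      rw [swap_sum]
      refine Finset.sum_congr rfl fun a _ => ?_
      rw [← Finset.mul_sum]
    rw [Finset.sum_congr rfl fun c _ => e2 c, swap_sum]
    have e3 : ∀ a, ∑ c, (ginv n g x i c * g x c a) * ∑ d, Chr n g x a l d * ginv n g x d j
        = (if i = a then (1:ℝ) else 0) * ∑ d, Chr n g x a l d * ginv n g x d j := by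
      intro a
      rw [← Finset.sum_mul, ginv_mul_g hgpos x i a]
    rw [Finset.sum_congr rfl fun a _ => e3 a]
    simp [ite_mul]
  rw [hP1, hP2]

end Aux

section Aux2

variable {n : ℕ} {g : (Fin n → ℝ) → Fin n → Fin n → ℝ} {f : (Fin n → ℝ) → ℝ}

/-- `Q(A,B) = g^{ij} A_i B_j`. -/
private def QF (g : (Fin n → ℝ) → Fin n → Fin n → ℝ) (x : Fin n → ℝ) (A B : Fin n → ℝ) : ℝ :=
  ∑ i, ∑ j, ginv n g x i j * A i * B j

/-- `(Γ*A)_c = Γ^b_{cl} A_b`. -/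
private def GamV (g : (Fin n → ℝ) → Fin n → Fin n → ℝ) (x : Fin n → ℝ) (l : Fin n)
    (A : Fin n → ℝ) : Fin n → ℝ := fun c => ∑ b, Chr n g x b c l * A b

/-- Covariant derivative `(∇_l ω)_h` of a 1-form. -/
private def nab (g : (Fin n → ℝ) → Fin n → Fin n → ℝ) (x : Fin n → ℝ) (l : Fin n)
    (ω : (Fin n → ℝ) → Fin n → ℝ) : Fin n → ℝ :=
  fun h => pd n (fun y => ω y h) l x - ∑ b, Chr n g x b h l * ω x b

private lemma QF_symm (hgsymm : ∀ x i j, g x i j = g x j i) (x : Fin n → ℝ) (A B : Fin n → ℝ) :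
    QF g x A B = QF g x B A := by
  simp only [QF]
  rw [swap_sum]
  exact Finset.sum_congr rfl fun i _ => Finset.sum_congr rfl fun j _ => by
    rw [ginv_symm hgsymm x j i]; ring

private lemma QF_sub_left (x : Fin n → ℝ) (P Q B : Fin n → ℝ) :
    QF g x (fun h => P h - Q h) B = QF g x P B - QF g x Q B := by
  simp only [QF, sub_mul, mul_sub, Finset.sum_sub_distrib]

private lemma QF_sub_right (x : Fin n → ℝ) (A P Q : Fin n → ℝ) :
    QF g x A (fun h => P h - Q h) = QF g x A P - QF g x A Q := by
  simp only [QF, sub_mul, mul_sub, Finset.sum_sub_distrib]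

private lemma QF_neg_left (x : Fin n → ℝ) (A B : Fin n → ℝ) :
    QF g x (fun h => -(A h)) B = -QF g x A B := by
  simp only [QF, mul_neg, neg_mul, Finset.sum_neg_distrib]

private lemma QF_neg_right (x : Fin n → ℝ) (A B : Fin n → ℝ) :
    QF g x A (fun h => -(B h)) = -QF g x A B := by
  simp only [QF, mul_neg, neg_mul, Finset.sum_neg_distrib]

private lemma QF_zero_left (x : Fin n → ℝ) (B : Fin n → ℝ) :
    QF g x (fun _ => (0:ℝ)) B = 0 := by simp [QF]

private lemma QF_zero_right (x : Fin n → ℝ) (A : Fin n → ℝ) :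
    QF g x A (fun _ => (0:ℝ)) = 0 := by simp [QF]

private lemma sum3_comm {M : Type*} [AddCommMonoid M] (F : Fin n → Fin n → Fin n → M) :
    ∑ a, ∑ b, ∑ c, F a b c = ∑ c, ∑ b, ∑ a, F a b c := by
  calc ∑ a, ∑ b, ∑ c, F a b c = ∑ b, ∑ a, ∑ c, F a b c := swap_sum _
    _ = ∑ b, ∑ c, ∑ a, F a b c := Finset.sum_congr rfl fun b _ => swap_sum _
    _ = ∑ c, ∑ b, ∑ a, F a b c := swap_sum _

private lemma sum_pd_ginv (hg : ContDiff ℝ (⊤ : ℕ∞) g) (hgsymm : ∀ x i j, g x i j = g x j i)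
    (hgpos : ∀ x, (Matrix.of (g x)).PosDef) (x : Fin n → ℝ) (l : Fin n) (A B : Fin n → ℝ) :
    ∑ i, ∑ j, pd n (fun y => ginv n g y i j) l x * A i * B j
      = -(QF g x (GamV g x l A) B + QF g x A (GamV g x l B)) := by
  have e0 : ∀ i j, pd n (fun y => ginv n g y i j) l x * A i * B j
      = -((∑ c, ginv n g x i c * Chr n g x j l c) * A i * B j
          + (∑ d, Chr n g x i l d * ginv n g x d j) * A i * B j) := by
    intro i j
    rw [pd_ginv_chr hg hgsymm hgpos x l i j]
    ring
  rw [Finset.sum_congr rfl fun i _ => Finset.sum_congr rfl fun j _ => e0 i j]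
  have esplit : ∑ i, ∑ j, (-((∑ c, ginv n g x i c * Chr n g x j l c) * A i * B j
        + (∑ d, Chr n g x i l d * ginv n g x d j) * A i * B j))
      = -((∑ i, ∑ j, (∑ c, ginv n g x i c * Chr n g x j l c) * A i * B j)
          + ∑ i, ∑ j, (∑ d, Chr n g x i l d * ginv n g x d j) * A i * B j) := by
    simp only [neg_add, Finset.sum_add_distrib, Finset.sum_neg_distrib]
    try ring
  rw [esplit]
  have S1eq : ∑ i, ∑ j, (∑ c, ginv n g x i c * Chr n g x j l c) * A i * B j
      = QF g x A (GamV g x l B) := by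
    have t1 : ∀ i : Fin n, ∑ j, (∑ c, ginv n g x i c * Chr n g x j l c) * A i * B j
        = ∑ j, ∑ c, ginv n g x i c * Chr n g x j l c * A i * B j :=
      fun i => Finset.sum_congr rfl fun j _ => by rw [Finset.sum_mul, Finset.sum_mul]
    rw [Finset.sum_congr rfl fun i _ => t1 i]
    rw [Finset.sum_congr rfl fun i (_ : i ∈ Finset.univ) =>
      swap_sum (fun j c => ginv n g x i c * Chr n g x j l c * A i * B j)]
    simp only [QF, GamV]
    refine Finset.sum_congr rfl fun i _ => Finset.sum_congr rfl fun c _ => ?_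
    rw [Finset.mul_sum]
    refine Finset.sum_congr rfl fun j _ => ?_
    rw [chr_symm hgsymm x j l c]
    ring
  have S2eq : ∑ i, ∑ j, (∑ d, Chr n g x i l d * ginv n g x d j) * A i * B j
      = QF g x (GamV g x l A) B := by
    have t1 : ∀ i : Fin n, ∑ j, (∑ d, Chr n g x i l d * ginv n g x d j) * A i * B j
        = ∑ j, ∑ d, Chr n g x i l d * ginv n g x d j * A i * B j :=
      fun i => Finset.sum_congr rfl fun j _ => by rw [Finset.sum_mul, Finset.sum_mul]
    rw [Finset.sum_congr rfl fun i _ => t1 i, sum3_comm]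
    simp only [QF, GamV]
    refine Finset.sum_congr rfl fun d _ => Finset.sum_congr rfl fun j _ => ?_
    rw [Finset.mul_sum, Finset.sum_mul]
    refine Finset.sum_congr rfl fun i _ => ?_
    rw [chr_symm hgsymm x i l d]
    ring
  rw [S1eq, S2eq]
  ring

private lemma key_dQ (hg : ContDiff ℝ (⊤ : ℕ∞) g) (hgsymm : ∀ x i j, g x i j = g x j i)
    (hgpos : ∀ x, (Matrix.of (g x)).PosDef) (x : Fin n → ℝ) (l : Fin n)
    (A B dA dB : Fin n → ℝ) :
    ∑ i, ∑ j, (pd n (fun y => ginv n g y i j) l x * A i * B j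
        + (ginv n g x i j * dA i * B j + ginv n g x i j * A i * dB j))
      = QF g x (fun h => dA h - GamV g x l A h) B
        + QF g x A (fun h => dB h - GamV g x l B h) := by
  have esplit : ∑ i, ∑ j, (pd n (fun y => ginv n g y i j) l x * A i * B j
        + (ginv n g x i j * dA i * B j + ginv n g x i j * A i * dB j))
      = (∑ i, ∑ j, pd n (fun y => ginv n g y i j) l x * A i * B j)
        + ((∑ i, ∑ j, ginv n g x i j * dA i * B j)
          + ∑ i, ∑ j, ginv n g x i j * A i * dB j) := by
    simp only [Finset.sum_add_distrib]
  rw [esplit, sum_pd_ginv hg hgsymm hgpos x l A B]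
  have h1 : ∑ i, ∑ j, ginv n g x i j * dA i * B j = QF g x dA B := rfl
  have h2 : ∑ i, ∑ j, ginv n g x i j * A i * dB j = QF g x A dB := rfl
  rw [h1, h2, QF_sub_left, QF_sub_right]
  ring

/-! #### Calculus on the cotangent bundle -/

private def coordCLM (n : ℕ) (a : Fin n) : Pt n →L[ℝ] ℝ :=
  (ContinuousLinearMap.proj a).comp (ContinuousLinearMap.snd ℝ (Fin n → ℝ) (Fin n → ℝ))

private lemma diff_coord {q : Pt n} {a : Fin n} :
    DifferentiableAt ℝ (fun p : Pt n => p.2 a) q :=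
  (coordCLM n a).differentiableAt

private lemma df_coord (q : Pt n) (u : Vec n) (a : Fin n) :
    fderiv ℝ (fun p : Pt n => p.2 a) q u = u.2 a := by
  have e : (fun p : Pt n => p.2 a) = ⇑(coordCLM n a) := rfl
  rw [e, ContinuousLinearMap.fderiv]
  rfl

private lemma cd_coord (a : Fin n) : ContDiff ℝ (⊤ : ℕ∞) (fun p : Pt n => p.2 a) :=
  (coordCLM n a).contDiff

private lemma diff_base {F' : Type*} [NormedAddCommGroup F'] [NormedSpace ℝ F']
    {H : (Fin n → ℝ) → F'} {q : Pt n} (hH : DifferentiableAt ℝ H q.1) :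
    DifferentiableAt ℝ (fun p : Pt n => H p.1) q :=
  hH.comp q differentiableAt_fst

private lemma df_base {F' : Type*} [NormedAddCommGroup F'] [NormedSpace ℝ F']
    {H : (Fin n → ℝ) → F'} {q : Pt n} (hH : DifferentiableAt ℝ H q.1) (u : Vec n) :
    fderiv ℝ (fun p : Pt n => H p.1) q u = fderiv ℝ H q.1 u.1 := by
  have e : (fun p : Pt n => H p.1) = H ∘ Prod.fst := rfl
  rw [e, fderiv_comp q hH differentiableAt_fst, fderiv_fst]
  rfl

private lemma df_mul {A B : Pt n → ℝ} {q : Pt n} (hA : DifferentiableAt ℝ A q)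
    (hB : DifferentiableAt ℝ B q) (u : Vec n) :
    fderiv ℝ (fun p => A p * B p) q u = fderiv ℝ A q u * B q + A q * fderiv ℝ B q u := by
  rw [fderiv_fun_mul hA hB]
  simp only [ContinuousLinearMap.add_apply, ContinuousLinearMap.smul_apply, smul_eq_mul]
  ring

private lemma df_add {A B : Pt n → ℝ} {q : Pt n} (hA : DifferentiableAt ℝ A q)
    (hB : DifferentiableAt ℝ B q) (u : Vec n) :
    fderiv ℝ (fun p => A p + B p) q u = fderiv ℝ A q u + fderiv ℝ B q u := by
  rw [fderiv_fun_add hA hB]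
  rfl

private lemma df_sum {ι : Type*} {s : Finset ι} {A : ι → Pt n → ℝ} {q : Pt n}
    (hA : ∀ a ∈ s, DifferentiableAt ℝ (A a) q) (u : Vec n) :
    fderiv ℝ (fun p => ∑ a ∈ s, A a p) q u = ∑ a ∈ s, fderiv ℝ (A a) q u := by
  rw [fderiv_fun_sum hA]
  simp

private lemma df_const (q : Pt n) (u : Vec n) (c : ℝ) :
    fderiv ℝ (fun _ : Pt n => c) q u = 0 := by
  simp

private lemma df_inv {A : Pt n → ℝ} {q : Pt n} (hA : DifferentiableAt ℝ A q) (h0 : A q ≠ 0)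
    (u : Vec n) :
    fderiv ℝ (fun p => (A p)⁻¹) q u = -((A q)^2)⁻¹ * fderiv ℝ A q u := by
  have h := ((hasFDerivAt_inv h0).comp q hA.hasFDerivAt).fderiv
  have e : (fun p => (A p)⁻¹) = (fun y : ℝ => y⁻¹) ∘ A := rfl
  rw [e, h]
  simp only [ContinuousLinearMap.coe_comp', Function.comp_apply,
    ContinuousLinearMap.smulRight_apply, ContinuousLinearMap.one_apply, smul_eq_mul,
    ContinuousLinearMap.toSpanSingleton_apply]
  ring

private lemma fderiv_fst_apply {F' : Pt n → Vec n} {q : Pt n} (hF : DifferentiableAt ℝ F' q)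
    (u : Pt n) :
    (fderiv ℝ F' q u).1 = fderiv ℝ (fun p => (F' p).1) q u := by
  have e : (fun p => (F' p).1)
      = ⇑(ContinuousLinearMap.fst ℝ (Fin n → ℝ) (Fin n → ℝ)) ∘ F' := rfl
  rw [e, fderiv_comp q (ContinuousLinearMap.fst ℝ (Fin n → ℝ) (Fin n → ℝ)).differentiableAt hF,
    ContinuousLinearMap.fderiv]
  rfl

private lemma fderiv_snd_apply {F' : Pt n → Vec n} {q : Pt n} (hF : DifferentiableAt ℝ F' q)
    (u : Pt n) (h : Fin n) :
    (fderiv ℝ F' q u).2 h = fderiv ℝ (fun p => (F' p).2 h) q u := by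
  have e : (fun p => (F' p).2 h)
      = ⇑((ContinuousLinearMap.proj (R := ℝ) (φ := fun _ : Fin n => ℝ) h).comp
          (ContinuousLinearMap.snd ℝ (Fin n → ℝ) (Fin n → ℝ))) ∘ F' := rfl
  rw [e, fderiv_comp q (ContinuousLinearMap.differentiableAt _) hF, ContinuousLinearMap.fderiv]
  rfl

/-! #### Smoothness of the lifts -/

private lemma cd_hlift (hg : ContDiff ℝ (⊤ : ℕ∞) g) (hgpos : ∀ x, (Matrix.of (g x)).PosDef)
    {X : (Fin n → ℝ) → Fin n → ℝ} (hX : ContDiff ℝ (⊤ : ℕ∞) X) :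
    ContDiff ℝ (⊤ : ℕ∞) (HLift n g X) := by
  have e : HLift n g X = fun q : Pt n =>
      ((X q.1 : Fin n → ℝ), fun h => ∑ a, ∑ j, q.2 a * Chr n g q.1 a h j * X q.1 j) := rfl
  rw [e]
  refine ContDiff.prodMk (hX.comp contDiff_fst) (contDiff_pi.mpr fun h => ?_)
  refine ContDiff.sum fun a _ => ContDiff.sum fun j _ => ?_
  exact ((cd_coord a).mul ((cd_chr hg hgpos a h j).comp contDiff_fst)).mul
    ((contDiff_pi.mp hX j).comp contDiff_fst)

private lemma cd_vlift {ω : (Fin n → ℝ) → Fin n → ℝ} (hω : ContDiff ℝ (⊤ : ℕ∞) ω) :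
    ContDiff ℝ (⊤ : ℕ∞) (VLift n ω) := by
  have e : VLift n ω = fun q : Pt n => ((0 : Fin n → ℝ), ω q.1) := rfl
  rw [e]
  exact ContDiff.prodMk contDiff_const (hω.comp contDiff_fst)

/-! #### Pointwise algebra of `vert` and the metric -/

private lemma vert_hlift (Z : Pt n → Fin n → ℝ) (q : Pt n) (h : Fin n) :
    vert n g q (HLiftP n g Z q) h = 0 := by
  simp [vert, HLiftP]

private lemma vert_hlift' (X : (Fin n → ℝ) → Fin n → ℝ) (q : Pt n) (h : Fin n) :
    vert n g q (HLift n g X q) h = 0 := vert_hlift _ q h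

private lemma vert_vlift (ω : (Fin n → ℝ) → Fin n → ℝ) (q : Pt n) (h : Fin n) :
    vert n g q (VLift n ω q) h = ω q.1 h := by
  simp [vert, VLift]

private lemma vert_pair (q : Pt n) (A : Fin n → ℝ) (h : Fin n) :
    vert n g q ((0 : Fin n → ℝ), A) h = A h := by
  simp [vert]

private lemma vert_add (q : Pt n) (u v : Vec n) (h : Fin n) :
    vert n g q (u + v) h = vert n g q u h + vert n g q v h := by
  simp only [vert, Prod.fst_add, Prod.snd_add, Pi.add_apply, mul_add, Finset.sum_add_distrib]
  ring

private lemma vert_sub (q : Pt n) (u v : Vec n) (h : Fin n) :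
    vert n g q (u - v) h = vert n g q u h - vert n g q v h := by
  simp only [vert, Prod.fst_sub, Prod.snd_sub, Pi.sub_apply, mul_sub, Finset.sum_sub_distrib]
  ring

private lemma CG_add_left (q : Pt n) (u v w : Vec n) :
    CGmetric n g f q (u + v) w = CGmetric n g f q u w + CGmetric n g f q v w := by
  simp only [CGmetric, Prod.fst_add, Pi.add_apply]
  simp only [vert_add, add_mul, mul_add, Finset.sum_add_distrib]
  ring

private lemma CG_sub_right (q : Pt n) (u v w : Vec n) :
    CGmetric n g f q u (v - w) = CGmetric n g f q u v - CGmetric n g f q u w := by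
  simp only [CGmetric, Prod.fst_sub, Pi.sub_apply]
  simp only [vert_sub, sub_mul, mul_sub, Finset.sum_sub_distrib]
  ring

private lemma CG_symm (hgsymm : ∀ x i j, g x i j = g x j i) (q : Pt n) (u v : Vec n) :
    CGmetric n g f q u v = CGmetric n g f q v u := by
  simp only [CGmetric]
  have h1 : ∑ i, ∑ j, g q.1 i j * u.1 i * v.1 j = ∑ i, ∑ j, g q.1 i j * v.1 i * u.1 j := by
    rw [swap_sum]
    exact Finset.sum_congr rfl fun i _ => Finset.sum_congr rfl fun j _ => by
      rw [hgsymm q.1 j i]; ring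
  have h2 : ∑ i, ∑ j, ginv n g q.1 i j * vert n g q u i * vert n g q v j
      = ∑ i, ∑ j, ginv n g q.1 i j * vert n g q v i * vert n g q u j := by
    rw [swap_sum]
    exact Finset.sum_congr rfl fun i _ => Finset.sum_congr rfl fun j _ => by
      rw [ginv_symm hgsymm q.1 j i]; ring
  rw [h1, h2]
  ring

private lemma CG_vlift_hlift (ωf Zf : (Fin n → ℝ) → Fin n → ℝ) (q : Pt n) :
    CGmetric n g f q (VLift n ωf q) (HLift n g Zf q) = 0 := by
  have h0 : ∀ h, vert n g q (HLift n g Zf q) h = 0 := vert_hlift' Zf q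
  have h1 : (VLift n ωf q).1 = (0 : Fin n → ℝ) := rfl
  simp [CGmetric, h0, h1]

private lemma CG_hlift_vert0 (X : (Fin n → ℝ) → Fin n → ℝ) (q : Pt n) (w : Vec n)
    (hw : w.1 = 0) :
    CGmetric n g f q (HLift n g X q) w = 0 := by
  have h0 : ∀ h, vert n g q (HLift n g X q) h = 0 := vert_hlift' X q
  simp [CGmetric, h0, hw]

private lemma CG_vert_pair (q : Pt n) (A B : Fin n → ℝ) :
    CGmetric n g f q ((0 : Fin n → ℝ), A) ((0 : Fin n → ℝ), B)
      = (1 / alpha n g q) * (QF g q.1 A B + QF g q.1 A q.2 * QF g q.1 B q.2) := by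
  have h1 : ∀ h, vert n g q ((0 : Fin n → ℝ), A) h = A h := vert_pair q A
  have h2 : ∀ h, vert n g q ((0 : Fin n → ℝ), B) h = B h := vert_pair q B
  simp [CGmetric, h1, h2, QF]

/-! #### Positivity -/

private lemma r2_nonneg (hgpos : ∀ x, (Matrix.of (g x)).PosDef) (q : Pt n) :
    0 ≤ ∑ i, ∑ j, ginv n g q.1 i j * q.2 i * q.2 j := by
  rcases eq_or_ne q.2 0 with h | h
  · simp [h]
  · have hinv : ((Matrix.of (g q.1))⁻¹).PosDef := (hgpos q.1).inv
    have h2 := hinv.dotProduct_mulVec_pos h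
    have e : dotProduct (star q.2) (((Matrix.of (g q.1))⁻¹).mulVec q.2)
        = ∑ i, ∑ j, ginv n g q.1 i j * q.2 i * q.2 j := by
      simp only [dotProduct, Matrix.mulVec, Pi.star_apply, star_trivial]
      refine Finset.sum_congr rfl fun i _ => ?_
      rw [Finset.mul_sum]
      refine Finset.sum_congr rfl fun j _ => ?_
      simp only [ginv]
      ring
    rw [e] at h2
    exact le_of_lt h2

private lemma alpha_pos (hgpos : ∀ x, (Matrix.of (g x)).PosDef) (q : Pt n) :
    0 < alpha n g q := by
  have h := r2_nonneg (g := g) hgpos q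
  simp only [alpha]
  linarith

private lemma posdef_cancel (hgpos : ∀ x, (Matrix.of (g x)).PosDef) (x : Fin n → ℝ)
    (v : Fin n → ℝ) (hv : ∀ l, ∑ i, g x l i * v i = 0) : v = 0 := by
  by_contra hne
  have h2 := (hgpos x).dotProduct_mulVec_pos hne
  have e : (Matrix.of (g x)).mulVec v = 0 := by
    funext l
    simpa [Matrix.mulVec, dotProduct] using hv l
  rw [e] at h2
  simp at h2

/-! #### The symmetrized Koszul identity -/

private lemma koszul (hgsymm : ∀ x i j, g x i j = g x j i)
    {D : VectorField n → VectorField n → VectorField n}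
    (hD : IsLeviCivita n (CGmetric n g f) D)
    (X Y Z : VectorField n) (hX : ContDiff ℝ (⊤ : ℕ∞) X) (hY : ContDiff ℝ (⊤ : ℕ∞) Y)
    (hZ : ContDiff ℝ (⊤ : ℕ∞) Z) (q : Pt n) :
    CGmetric n g f q (D X Y q) (Z q) + CGmetric n g f q (D Y X q) (Z q)
      = fderiv ℝ (fun q' => CGmetric n g f q' (Y q') (Z q')) q (X q)
        + fderiv ℝ (fun q' => CGmetric n g f q' (X q') (Z q')) q (Y q)
        - fderiv ℝ (fun q' => CGmetric n g f q' (X q') (Y q')) q (Z q)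
        - CGmetric n g f q (Y q) (bracket n X Z q)
        - CGmetric n g f q (X q) (bracket n Y Z q) := by
  have h1 := hD.compat X Y Z hY hZ q
  have h2 := hD.compat Y X Z hX hZ q
  have h3 := hD.compat Z X Y hX hY q
  have t1 : bracket n X Z q = D X Z q - D Z X q := (congrFun (hD.torsion_free X Z) q).symm
  have t2 : bracket n Y Z q = D Y Z q - D Z Y q := (congrFun (hD.torsion_free Y Z) q).symm
  have s1 : CGmetric n g f q (D Z X q) (Y q) = CGmetric n g f q (Y q) (D Z X q) :=
    CG_symm hgsymm q _ _
  have s2 : CGmetric n g f q (D Z Y q) (X q) = CGmetric n g f q (X q) (D Z Y q) :=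
    CG_symm hgsymm q _ _
  rw [t1, t2, CG_sub_right, CG_sub_right, h1, h2, h3]
  linarith [s1, s2]

end Aux2

section Aux3

variable {n : ℕ} {g : (Fin n → ℝ) → Fin n → Fin n → ℝ} {f : (Fin n → ℝ) → ℝ}

private lemma hlift_fst (X : (Fin n → ℝ) → Fin n → ℝ) (q : Pt n) :
    (HLift n g X q).1 = X q.1 := rfl

private lemma hlift_single_snd (q : Pt n) (l h : Fin n) :
    (HLift n g (fun _ => Pi.single l 1) q).2 h = ∑ a, q.2 a * Chr n g q.1 a h l := by
  show (∑ a, ∑ j, q.2 a * Chr n g q.1 a h j * (Pi.single l 1 : Fin n → ℝ) j) = _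
  exact Finset.sum_congr rfl fun a _ => sum_single (fun j => q.2 a * Chr n g q.1 a h j) l

/-! #### Bracket computations -/

private lemma bracket_hv_fst (hg : ContDiff ℝ (⊤ : ℕ∞) g)
    (hgpos : ∀ x, (Matrix.of (g x)).PosDef) {X : (Fin n → ℝ) → Fin n → ℝ}
    (hX : ContDiff ℝ (⊤ : ℕ∞) X) (q : Pt n) (l : Fin n) :
    (bracket n (HLift n g X) (VLift n (fun _ => Pi.single l 1)) q).1 = 0 := by
  have hZc : VLift n (fun _ : Fin n → ℝ => Pi.single l (1:ℝ))
      = fun _ : Pt n => ((0 : Fin n → ℝ), Pi.single l (1:ℝ)) := rfl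
  have h1 : (fderiv ℝ (VLift n (fun _ : Fin n → ℝ => Pi.single l (1:ℝ))) q
      (HLift n g X q)).1 = 0 := by
    rw [hZc, fderiv_fun_const]
    simp
  have h2 : (fderiv ℝ (HLift n g X) q
      (VLift n (fun _ : Fin n → ℝ => Pi.single l (1:ℝ)) q)).1 = 0 := by
    rw [fderiv_fst_apply (cdiffAt (cd_hlift hg hgpos hX) q)]
    have e : (fun p : Pt n => (HLift n g X p).1) = fun p : Pt n => X p.1 := rfl
    rw [e, df_base (cdiffAt hX q.1)]
    have e2 : ((VLift n (fun _ : Fin n → ℝ => Pi.single l (1:ℝ))) q).1 = 0 := rfl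
    rw [e2]
    simp
  simp only [bracket, Prod.fst_sub, h1, h2, sub_zero]

private lemma bracket_vh (hg : ContDiff ℝ (⊤ : ℕ∞) g)
    (hgpos : ∀ x, (Matrix.of (g x)).PosDef) {ω : (Fin n → ℝ) → Fin n → ℝ}
    (hω : ContDiff ℝ (⊤ : ℕ∞) ω) (q : Pt n) (l : Fin n) :
    bracket n (VLift n ω) (HLift n g (fun _ => Pi.single l 1)) q
      = ((0 : Fin n → ℝ), fun h => -(nab g q.1 l ω h)) := by
  have hZd : DifferentiableAt ℝ (HLift n g (fun _ : Fin n → ℝ => Pi.single l (1:ℝ))) q :=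
    cdiffAt (cd_hlift hg hgpos contDiff_const) q
  have hVd : DifferentiableAt ℝ (VLift n ω) q := cdiffAt (cd_vlift hω) q
  have hfst : (bracket n (VLift n ω) (HLift n g fun _ => Pi.single l 1) q).1 = 0 := by
    simp only [bracket, Prod.fst_sub]
    rw [fderiv_fst_apply hZd, fderiv_fst_apply hVd]
    have e1 : (fun p : Pt n => (HLift n g (fun _ : Fin n → ℝ => Pi.single l (1:ℝ)) p).1)
        = fun _ : Pt n => Pi.single l (1:ℝ) := rfl
    have e2 : (fun p : Pt n => (VLift n ω p).1) = fun _ : Pt n => (0 : Fin n → ℝ) := rfl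
    rw [e1, e2, fderiv_fun_const, fderiv_fun_const]
    simp
  have hsnd : ∀ h, (bracket n (VLift n ω) (HLift n g fun _ => Pi.single l 1) q).2 h
      = -(nab g q.1 l ω h) := by
    intro h
    simp only [bracket, Prod.snd_sub, Pi.sub_apply]
    rw [fderiv_snd_apply hZd, fderiv_snd_apply hVd]
    have e1 : (fun p : Pt n => (HLift n g (fun _ : Fin n → ℝ => Pi.single l (1:ℝ)) p).2 h)
        = fun p : Pt n => ∑ a, ∑ j, p.2 a * Chr n g p.1 a h j * (Pi.single l 1 : Fin n → ℝ) j := rfl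
    have e2 : (fun p : Pt n => (VLift n ω p).2 h) = fun p : Pt n => ω p.1 h := rfl
    rw [e1, e2]
    have hV1 : (VLift n ω q).1 = (0 : Fin n → ℝ) := rfl
    have d1 : fderiv ℝ
        (fun p : Pt n => ∑ a, ∑ j, p.2 a * Chr n g p.1 a h j * (Pi.single l 1 : Fin n → ℝ) j) q
        (VLift n ω q) = ∑ a, ω q.1 a * Chr n g q.1 a h l := by
      have hdterm : ∀ (a j : Fin n), DifferentiableAt ℝ
          (fun p : Pt n => p.2 a * Chr n g p.1 a h j * (Pi.single l 1 : Fin n → ℝ) j) q :=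
        fun a j => (diff_coord.mul (diff_base (cdiffAt (cd_chr hg hgpos a h j) q.1))).mul
          (differentiableAt_const _)
      rw [df_sum (fun a _ => DifferentiableAt.fun_sum fun j _ => hdterm a j) (VLift n ω q)]
      have hper : ∀ a : Fin n, fderiv ℝ
          (fun p : Pt n => ∑ j, p.2 a * Chr n g p.1 a h j * (Pi.single l 1 : Fin n → ℝ) j) q
          (VLift n ω q) = ω q.1 a * Chr n g q.1 a h l := by
        intro a
        rw [df_sum (fun j _ => hdterm a j) (VLift n ω q)]
        have hper2 : ∀ j : Fin n, fderiv ℝ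
            (fun p : Pt n => p.2 a * Chr n g p.1 a h j * (Pi.single l 1 : Fin n → ℝ) j) q
            (VLift n ω q) = ω q.1 a * Chr n g q.1 a h j * (Pi.single l 1 : Fin n → ℝ) j := by
          intro j
          rw [df_mul (diff_coord.fun_mul (diff_base (cdiffAt (cd_chr hg hgpos a h j) q.1)))
              (differentiableAt_const _) (VLift n ω q),
            df_mul diff_coord (diff_base (cdiffAt (cd_chr hg hgpos a h j) q.1)) (VLift n ω q),
            df_coord, df_base (cdiffAt (cd_chr hg hgpos a h j) q.1), df_const, hV1]
          have : (VLift n ω q).2 a = ω q.1 a := rfl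
          rw [this]
          simp
        rw [Finset.sum_congr rfl fun j _ => hper2 j]
        exact sum_single (fun j => ω q.1 a * Chr n g q.1 a h j) l
      exact Finset.sum_congr rfl fun a _ => hper a
    have d2 : fderiv ℝ (fun p : Pt n => ω p.1 h) q
        (HLift n g (fun _ : Fin n → ℝ => Pi.single l (1:ℝ)) q) = pd n (fun y => ω y h) l q.1 := by
      rw [df_base (cdiffAt (contDiff_pi.mp hω h) q.1)]
      rfl
    rw [d1, d2]
    simp only [nab]
    have e3 : ∑ a, ω q.1 a * Chr n g q.1 a h l = ∑ b, Chr n g q.1 b h l * ω q.1 b :=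
      Finset.sum_congr rfl fun a _ => mul_comm _ _
    rw [e3]
    ring
  exact Prod.ext_iff.mpr ⟨hfst, funext hsnd⟩

/-! #### Directional derivatives of the metric coefficients -/

private lemma dalpha_zero (hg : ContDiff ℝ (⊤ : ℕ∞) g) (hgsymm : ∀ x i j, g x i j = g x j i)
    (hgpos : ∀ x, (Matrix.of (g x)).PosDef) (q : Pt n) (l : Fin n) :
    fderiv ℝ (alpha n g) q (HLift n g (fun _ => Pi.single l 1) q) = 0 := by
  set u := HLift n g (fun _ : Fin n → ℝ => Pi.single l (1:ℝ)) q with hu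
  have hu1 : u.1 = Pi.single l (1:ℝ) := rfl
  have hdG : ∀ i j : Fin n, DifferentiableAt ℝ (fun x => ginv n g x i j) q.1 :=
    fun i j => cdiffAt (cd_ginv hg hgpos i j) q.1
  have e : alpha n g = fun q' : Pt n => 1 + ∑ i, ∑ j, ginv n g q'.1 i j * q'.2 i * q'.2 j := rfl
  rw [e, fderiv_const_add]
  have hdterm : ∀ (i j : Fin n), DifferentiableAt ℝ
      (fun q' : Pt n => ginv n g q'.1 i j * q'.2 i * q'.2 j) q :=
    fun i j => ((diff_base (hdG i j)).mul diff_coord).mul diff_coord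
  rw [df_sum (fun i _ => DifferentiableAt.fun_sum fun j _ => hdterm i j) u]
  rw [Finset.sum_congr rfl fun i (_ : i ∈ Finset.univ) => df_sum (fun j _ => hdterm i j) u]
  have hterm : ∀ i j : Fin n, fderiv ℝ (fun q' : Pt n => ginv n g q'.1 i j * q'.2 i * q'.2 j) q u
      = pd n (fun y => ginv n g y i j) l q.1 * q.2 i * q.2 j
        + (ginv n g q.1 i j * u.2 i * q.2 j + ginv n g q.1 i j * q.2 i * u.2 j) := by
    intro i j
    rw [df_mul ((diff_base (hdG i j)).fun_mul diff_coord) diff_coord u,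
      df_mul (diff_base (hdG i j)) diff_coord u, df_base (hdG i j) u, df_coord, df_coord, hu1]
    simp only [pd]
    ring
  rw [Finset.sum_congr rfl fun i _ => Finset.sum_congr rfl fun j _ => hterm i j]
  rw [key_dQ hg hgsymm hgpos q.1 l q.2 q.2 u.2 u.2]
  have hzero : (fun h => u.2 h - GamV g q.1 l q.2 h) = fun _ => (0:ℝ) := by
    funext h
    rw [hu, hlift_single_snd q l h]
    simp only [GamV]
    rw [sub_eq_zero]
    exact Finset.sum_congr rfl fun a _ => mul_comm _ _
  rw [hzero, QF_zero_left, QF_zero_right]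
  ring

private lemma dB_vv (hg : ContDiff ℝ (⊤ : ℕ∞) g) (hgsymm : ∀ x i j, g x i j = g x j i)
    (hgpos : ∀ x, (Matrix.of (g x)).PosDef) {ω θ : (Fin n → ℝ) → Fin n → ℝ}
    (hω : ContDiff ℝ (⊤ : ℕ∞) ω) (hθ : ContDiff ℝ (⊤ : ℕ∞) θ) (q : Pt n) (l : Fin n) :
    fderiv ℝ (fun q' : Pt n => ∑ i, ∑ j, ginv n g q'.1 i j * ω q'.1 i * θ q'.1 j) q
        (HLift n g (fun _ => Pi.single l 1) q)
      = QF g q.1 (nab g q.1 l ω) (θ q.1) + QF g q.1 (ω q.1) (nab g q.1 l θ) := by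
  set u := HLift n g (fun _ : Fin n → ℝ => Pi.single l (1:ℝ)) q with hu
  have hu1 : u.1 = Pi.single l (1:ℝ) := rfl
  have hdG : ∀ i j : Fin n, DifferentiableAt ℝ (fun x => ginv n g x i j) q.1 :=
    fun i j => cdiffAt (cd_ginv hg hgpos i j) q.1
  have hdω : ∀ i : Fin n, DifferentiableAt ℝ (fun x => ω x i) q.1 :=
    fun i => cdiffAt (contDiff_pi.mp hω i) q.1
  have hdθ : ∀ i : Fin n, DifferentiableAt ℝ (fun x => θ x i) q.1 :=
    fun i => cdiffAt (contDiff_pi.mp hθ i) q.1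
  have hdterm : ∀ (i j : Fin n), DifferentiableAt ℝ
      (fun q' : Pt n => ginv n g q'.1 i j * ω q'.1 i * θ q'.1 j) q :=
    fun i j => ((diff_base (hdG i j)).mul (diff_base (hdω i))).mul (diff_base (hdθ j))
  rw [df_sum (fun i _ => DifferentiableAt.fun_sum fun j _ => hdterm i j) u]
  rw [Finset.sum_congr rfl fun i (_ : i ∈ Finset.univ) => df_sum (fun j _ => hdterm i j) u]
  have hterm : ∀ i j : Fin n,
      fderiv ℝ (fun q' : Pt n => ginv n g q'.1 i j * ω q'.1 i * θ q'.1 j) q u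
      = pd n (fun y => ginv n g y i j) l q.1 * ω q.1 i * θ q.1 j
        + (ginv n g q.1 i j * pd n (fun y => ω y i) l q.1 * θ q.1 j
          + ginv n g q.1 i j * ω q.1 i * pd n (fun y => θ y j) l q.1) := by
    intro i j
    rw [df_mul ((diff_base (hdG i j)).fun_mul (diff_base (hdω i))) (diff_base (hdθ j)) u,
      df_mul (diff_base (hdG i j)) (diff_base (hdω i)) u, df_base (hdG i j) u,
      df_base (hdω i) u, df_base (hdθ j) u, hu1]
    simp only [pd]
    ring
  rw [Finset.sum_congr rfl fun i _ => Finset.sum_congr rfl fun j _ => hterm i j]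
  rw [key_dQ hg hgsymm hgpos q.1 l (ω q.1) (θ q.1)
    (fun i => pd n (fun y => ω y i) l q.1) (fun j => pd n (fun y => θ y j) l q.1)]
  rfl

private lemma dC_vv (hg : ContDiff ℝ (⊤ : ℕ∞) g) (hgsymm : ∀ x i j, g x i j = g x j i)
    (hgpos : ∀ x, (Matrix.of (g x)).PosDef) {ω : (Fin n → ℝ) → Fin n → ℝ}
    (hω : ContDiff ℝ (⊤ : ℕ∞) ω) (q : Pt n) (l : Fin n) :
    fderiv ℝ (fun q' : Pt n => ∑ i, ∑ j, ginv n g q'.1 i j * ω q'.1 i * q'.2 j) q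
        (HLift n g (fun _ => Pi.single l 1) q)
      = QF g q.1 (nab g q.1 l ω) q.2 := by
  set u := HLift n g (fun _ : Fin n → ℝ => Pi.single l (1:ℝ)) q with hu
  have hu1 : u.1 = Pi.single l (1:ℝ) := rfl
  have hdG : ∀ i j : Fin n, DifferentiableAt ℝ (fun x => ginv n g x i j) q.1 :=
    fun i j => cdiffAt (cd_ginv hg hgpos i j) q.1
  have hdω : ∀ i : Fin n, DifferentiableAt ℝ (fun x => ω x i) q.1 :=
    fun i => cdiffAt (contDiff_pi.mp hω i) q.1
  have hdterm : ∀ (i j : Fin n), DifferentiableAt ℝ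
      (fun q' : Pt n => ginv n g q'.1 i j * ω q'.1 i * q'.2 j) q :=
    fun i j => ((diff_base (hdG i j)).mul (diff_base (hdω i))).mul diff_coord
  rw [df_sum (fun i _ => DifferentiableAt.fun_sum fun j _ => hdterm i j) u]
  rw [Finset.sum_congr rfl fun i (_ : i ∈ Finset.univ) => df_sum (fun j _ => hdterm i j) u]
  have hterm : ∀ i j : Fin n,
      fderiv ℝ (fun q' : Pt n => ginv n g q'.1 i j * ω q'.1 i * q'.2 j) q u
      = pd n (fun y => ginv n g y i j) l q.1 * ω q.1 i * q.2 j
        + (ginv n g q.1 i j * pd n (fun y => ω y i) l q.1 * q.2 j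
          + ginv n g q.1 i j * ω q.1 i * u.2 j) := by
    intro i j
    rw [df_mul ((diff_base (hdG i j)).fun_mul (diff_base (hdω i))) diff_coord u,
      df_mul (diff_base (hdG i j)) (diff_base (hdω i)) u, df_base (hdG i j) u,
      df_base (hdω i) u, df_coord, hu1]
    simp only [pd]
    ring
  rw [Finset.sum_congr rfl fun i _ => Finset.sum_congr rfl fun j _ => hterm i j]
  rw [key_dQ hg hgsymm hgpos q.1 l (ω q.1) q.2 (fun i => pd n (fun y => ω y i) l q.1) u.2]
  have hzero : (fun h => u.2 h - GamV g q.1 l q.2 h) = fun _ => (0:ℝ) := by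
    funext h
    rw [hu, hlift_single_snd q l h]
    simp only [GamV]
    rw [sub_eq_zero]
    exact Finset.sum_congr rfl fun a _ => mul_comm _ _
  rw [hzero, QF_zero_right]
  have : (fun h => pd n (fun y => ω y h) l q.1 - GamV g q.1 l (ω q.1) h) = nab g q.1 l ω := rfl
  rw [this]
  ring

/-! #### The full vertical-vertical derivative -/

private lemma dCG_vv (hg : ContDiff ℝ (⊤ : ℕ∞) g) (hgsymm : ∀ x i j, g x i j = g x j i)
    (hgpos : ∀ x, (Matrix.of (g x)).PosDef) {ω θ : (Fin n → ℝ) → Fin n → ℝ}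
    (hω : ContDiff ℝ (⊤ : ℕ∞) ω) (hθ : ContDiff ℝ (⊤ : ℕ∞) θ) (q : Pt n) (l : Fin n) :
    fderiv ℝ (fun q' => CGmetric n g f q' (VLift n ω q') (VLift n θ q')) q
        (HLift n g (fun _ => Pi.single l 1) q)
      = (1 / alpha n g q) *
          ((QF g q.1 (nab g q.1 l ω) (θ q.1) + QF g q.1 (ω q.1) (nab g q.1 l θ))
            + (QF g q.1 (nab g q.1 l ω) q.2 * QF g q.1 (θ q.1) q.2
              + QF g q.1 (ω q.1) q.2 * QF g q.1 (nab g q.1 l θ) q.2)) := by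
  set u := HLift n g (fun _ : Fin n → ℝ => Pi.single l (1:ℝ)) q with hu
  have hdG : ∀ i j : Fin n, DifferentiableAt ℝ (fun x => ginv n g x i j) q.1 :=
    fun i j => cdiffAt (cd_ginv hg hgpos i j) q.1
  have hdω : ∀ i : Fin n, DifferentiableAt ℝ (fun x => ω x i) q.1 :=
    fun i => cdiffAt (contDiff_pi.mp hω i) q.1
  have hdθ : ∀ i : Fin n, DifferentiableAt ℝ (fun x => θ x i) q.1 :=
    fun i => cdiffAt (contDiff_pi.mp hθ i) q.1
  have hfun : (fun q' => CGmetric n g f q' (VLift n ω q') (VLift n θ q'))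
      = fun q' : Pt n => (alpha n g q')⁻¹ *
          ((∑ i, ∑ j, ginv n g q'.1 i j * ω q'.1 i * θ q'.1 j)
            + (∑ i, ∑ j, ginv n g q'.1 i j * ω q'.1 i * q'.2 j)
              * (∑ i, ∑ j, ginv n g q'.1 i j * θ q'.1 i * q'.2 j)) := by
    funext q'
    have h1 : ∀ h, vert n g q' (VLift n ω q') h = ω q'.1 h := vert_vlift ω q'
    have h2 : ∀ h, vert n g q' (VLift n θ q') h = θ q'.1 h := vert_vlift θ q'
    have h3 : (VLift n ω q').1 = (0 : Fin n → ℝ) := rfl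
    simp [CGmetric, h1, h2, h3, one_div]
  rw [hfun]
  have hdB : DifferentiableAt ℝ
      (fun q' : Pt n => ∑ i, ∑ j, ginv n g q'.1 i j * ω q'.1 i * θ q'.1 j) q :=
    DifferentiableAt.fun_sum fun i _ => DifferentiableAt.fun_sum fun j _ =>
      ((diff_base (hdG i j)).mul (diff_base (hdω i))).mul (diff_base (hdθ j))
  have hdCω : DifferentiableAt ℝ
      (fun q' : Pt n => ∑ i, ∑ j, ginv n g q'.1 i j * ω q'.1 i * q'.2 j) q :=
    DifferentiableAt.fun_sum fun i _ => DifferentiableAt.fun_sum fun j _ =>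
      ((diff_base (hdG i j)).mul (diff_base (hdω i))).mul diff_coord
  have hdCθ : DifferentiableAt ℝ
      (fun q' : Pt n => ∑ i, ∑ j, ginv n g q'.1 i j * θ q'.1 i * q'.2 j) q :=
    DifferentiableAt.fun_sum fun i _ => DifferentiableAt.fun_sum fun j _ =>
      ((diff_base (hdG i j)).mul (diff_base (hdθ i))).mul diff_coord
  have hdα : DifferentiableAt ℝ (alpha n g) q := by
    have e : alpha n g
        = fun q' : Pt n => 1 + ∑ i, ∑ j, ginv n g q'.1 i j * q'.2 i * q'.2 j := rfl
    rw [e]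
    exact (differentiableAt_const 1).fun_add (DifferentiableAt.fun_sum fun i _ =>
      DifferentiableAt.fun_sum fun j _ => ((diff_base (hdG i j)).mul diff_coord).mul diff_coord)
  have hαne : alpha n g q ≠ 0 := (alpha_pos hgpos q).ne'
  have hdinv : DifferentiableAt ℝ (fun q' => (alpha n g q')⁻¹) q := hdα.inv hαne
  rw [df_mul hdinv (hdB.fun_add (hdCω.fun_mul hdCθ)) u]
  rw [df_inv hdα hαne u]
  rw [dalpha_zero hg hgsymm hgpos q l]
  rw [df_add hdB (hdCω.fun_mul hdCθ) u, df_mul hdCω hdCθ u]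
  rw [dB_vv hg hgsymm hgpos hω hθ q l, dC_vv hg hgsymm hgpos hω q l,
    dC_vv hg hgsymm hgpos hθ q l]
  have v1 : (∑ i, ∑ j, ginv n g q.1 i j * ω q.1 i * q.2 j) = QF g q.1 (ω q.1) q.2 := rfl
  have v2 : (∑ i, ∑ j, ginv n g q.1 i j * θ q.1 i * q.2 j) = QF g q.1 (θ q.1) q.2 := rfl
  rw [v1, v2, one_div]
  ring

end Aux3

section Main

variable {n : ℕ} {g : (Fin n → ℝ) → Fin n → Fin n → ℝ} {f : (Fin n → ℝ) → ℝ}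

private lemma CG_S_hsingle (q : Pt n) (S : Vec n) (l : Fin n) :
    CGmetric n g f q S (HLift n g (fun _ => Pi.single l 1) q)
      = f q.1 * ∑ i, g q.1 i l * S.1 i := by
  have h0 : ∀ h, vert n g q (HLift n g (fun _ : Fin n → ℝ => Pi.single l (1:ℝ)) q) h = 0 :=
    vert_hlift' _ q
  have e1 : (HLift n g (fun _ : Fin n → ℝ => Pi.single l (1:ℝ)) q).1 = Pi.single l (1:ℝ) := rfl
  simp only [CGmetric, h0, e1, mul_zero, zero_mul, Finset.sum_const_zero, add_zero, mul_zero]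
  have e : ∀ i : Fin n, ∑ j, g q.1 i j * S.1 i * (Pi.single l 1 : Fin n → ℝ) j = g q.1 i l * S.1 i :=
    fun i => sum_single (fun j => g q.1 i j * S.1 i) l
  rw [Finset.sum_congr rfl fun i _ => e i]

private lemma CG_S_vsingle (q : Pt n) (S : Vec n) (l : Fin n) :
    CGmetric n g f q S ((0 : Fin n → ℝ), Pi.single l (1:ℝ))
      = (1 / alpha n g q) * ((∑ i, ginv n g q.1 i l * vert n g q S i)
          + (∑ i, ∑ j, ginv n g q.1 i j * vert n g q S i * q.2 j)
            * (∑ j, ginv n g q.1 l j * q.2 j)) := by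
  have hv : ∀ h, vert n g q ((0 : Fin n → ℝ), Pi.single l (1:ℝ)) h
      = (Pi.single l 1 : Fin n → ℝ) h :=
    vert_pair q (Pi.single l 1)
  simp only [CGmetric, hv]
  have h2 : ∀ i : Fin n, ∑ j, ginv n g q.1 i j * vert n g q S i * (Pi.single l 1 : Fin n → ℝ) j
      = ginv n g q.1 i l * vert n g q S i :=
    fun i => sum_single (fun j => ginv n g q.1 i j * vert n g q S i) l
  have h3 : ∑ i, ∑ j, ginv n g q.1 i j * (Pi.single l 1 : Fin n → ℝ) i * q.2 j
      = ∑ j, ginv n g q.1 l j * q.2 j := by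
    have e : ∀ i : Fin n, ∑ j, ginv n g q.1 i j * (Pi.single l 1 : Fin n → ℝ) i * q.2 j
        = (Pi.single l 1 : Fin n → ℝ) i * ∑ j, ginv n g q.1 i j * q.2 j := by
      intro i
      rw [Finset.mul_sum]
      exact Finset.sum_congr rfl fun j _ => by ring
    rw [Finset.sum_congr rfl fun i _ => e i]
    exact single_sum (fun i => ∑ j, ginv n g q.1 i j * q.2 j) l
  rw [Finset.sum_congr rfl fun i _ => h2 i, h3]
  simp

private lemma case_horizontal (hg : ContDiff ℝ (⊤ : ℕ∞) g)
    (hgsymm : ∀ x i j, g x i j = g x j i) (hgpos : ∀ x, (Matrix.of (g x)).PosDef)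
    (hf : ContDiff ℝ (⊤ : ℕ∞) f)
    {D : VectorField n → VectorField n → VectorField n}
    (hD : IsLeviCivita n (CGmetric n g f) D)
    {X Y : (Fin n → ℝ) → Fin n → ℝ} (hX : ContDiff ℝ (⊤ : ℕ∞) X)
    (hY : ContDiff ℝ (⊤ : ℕ∞) Y) (q : Pt n) (h : Fin n) :
    vert n g q (D (HLift n g X) (HLift n g Y) q + D (HLift n g Y) (HLift n g X) q) h = 0 := by
  have hHX : ContDiff ℝ (⊤ : ℕ∞) (HLift n g X) := cd_hlift hg hgpos hX
  have hHY : ContDiff ℝ (⊤ : ℕ∞) (HLift n g Y) := cd_hlift hg hgpos hY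
  set S := D (HLift n g X) (HLift n g Y) q + D (HLift n g Y) (HLift n g X) q with hS
  have main : ∀ l : Fin n,
      CGmetric n g f q S (VLift n (fun _ => Pi.single l 1) q) = 0 := by
    intro l
    have hZ : ContDiff ℝ (⊤ : ℕ∞) (VLift n (fun _ : Fin n → ℝ => Pi.single l (1:ℝ))) :=
      cd_vlift contDiff_const
    have K := koszul hgsymm hD (HLift n g X) (HLift n g Y)
      (VLift n (fun _ => Pi.single l 1)) hHX hHY hZ q
    rw [hS, CG_add_left, K]
    have R1 : fderiv ℝ (fun q' => CGmetric n g f q' (HLift n g Y q')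
        (VLift n (fun _ => Pi.single l 1) q')) q (HLift n g X q) = 0 := by
      have hfun : (fun q' => CGmetric n g f q' (HLift n g Y q')
          (VLift n (fun _ => Pi.single l 1) q')) = fun _ : Pt n => (0:ℝ) := by
        funext q'
        exact CG_hlift_vert0 Y q' _ rfl
      rw [hfun, fderiv_fun_const]
      simp
    have R2 : fderiv ℝ (fun q' => CGmetric n g f q' (HLift n g X q')
        (VLift n (fun _ => Pi.single l 1) q')) q (HLift n g Y q) = 0 := by
      have hfun : (fun q' => CGmetric n g f q' (HLift n g X q')
          (VLift n (fun _ => Pi.single l 1) q')) = fun _ : Pt n => (0:ℝ) := by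
        funext q'
        exact CG_hlift_vert0 X q' _ rfl
      rw [hfun, fderiv_fun_const]
      simp
    have R3 : fderiv ℝ (fun q' => CGmetric n g f q' (HLift n g X q') (HLift n g Y q')) q
        (VLift n (fun _ => Pi.single l 1) q) = 0 := by
      have hfun : (fun q' => CGmetric n g f q' (HLift n g X q') (HLift n g Y q'))
          = fun q' : Pt n =>
              (fun x => f x * ∑ i, ∑ j, g x i j * X x i * Y x j) q'.1 := by
        funext q'
        have h0 : ∀ h, vert n g q' (HLift n g Y q') h = 0 := vert_hlift' Y q'
        have h0' : ∀ h, vert n g q' (HLift n g X q') h = 0 := vert_hlift' X q'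
        have hx1 : (HLift n g X q').1 = X q'.1 := rfl
        have hy1 : (HLift n g Y q').1 = Y q'.1 := rfl
        simp [CGmetric, h0, h0', hx1, hy1]
      rw [hfun]
      have hH : DifferentiableAt ℝ (fun x => f x * ∑ i, ∑ j, g x i j * X x i * Y x j) q.1 := by
        refine (cdiffAt hf q.1).mul ?_
        exact DifferentiableAt.fun_sum fun i _ => DifferentiableAt.fun_sum fun j _ =>
          ((cdiffAt (cd_entry hg i j) q.1).mul (cdiffAt (contDiff_pi.mp hX i) q.1)).mul
            (cdiffAt (contDiff_pi.mp hY j) q.1)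
      rw [df_base hH]
      have e0 : (VLift n (fun _ : Fin n → ℝ => Pi.single l (1:ℝ)) q).1 = 0 := rfl
      rw [e0]
      simp
    have R4 : CGmetric n g f q (HLift n g Y q)
        (bracket n (HLift n g X) (VLift n (fun _ => Pi.single l 1)) q) = 0 :=
      CG_hlift_vert0 Y q _ (bracket_hv_fst hg hgpos hX q l)
    have R5 : CGmetric n g f q (HLift n g X q)
        (bracket n (HLift n g Y) (VLift n (fun _ => Pi.single l 1)) q) = 0 :=
      CG_hlift_vert0 X q _ (bracket_hv_fst hg hgpos hY q l)
    rw [R1, R2, R3, R4, R5]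
    ring
  have hαne : (1 / alpha n g q) ≠ 0 := one_div_ne_zero (alpha_pos hgpos q).ne'
  have hT : ∀ l : Fin n, (∑ i, ginv n g q.1 i l * vert n g q S i)
      + (∑ i, ∑ j, ginv n g q.1 i j * vert n g q S i * q.2 j)
        * (∑ j, ginv n g q.1 l j * q.2 j) = 0 := by
    intro l
    have hm := main l
    have e0 : VLift n (fun _ : Fin n → ℝ => Pi.single l (1:ℝ)) q
        = ((0 : Fin n → ℝ), Pi.single l (1:ℝ)) := rfl
    rw [e0, CG_S_vsingle] at hm
    rcases mul_eq_zero.mp hm with h' | h'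
    · exact absurd h' hαne
    · exact h'
  set c := ∑ i, ∑ j, ginv n g q.1 i j * vert n g q S i * q.2 j with hc
  have hvm : ∀ m : Fin n, vert n g q S m + c * q.2 m = 0 := by
    intro m
    have hzero : ∑ l, ((∑ i, ginv n g q.1 i l * vert n g q S i)
        + c * (∑ j, ginv n g q.1 l j * q.2 j)) * g q.1 l m = 0 := by
      have : ∀ l : Fin n, ((∑ i, ginv n g q.1 i l * vert n g q S i)
          + c * (∑ j, ginv n g q.1 l j * q.2 j)) * g q.1 l m = 0 := by
        intro l
        rw [hT l, zero_mul]
      rw [Finset.sum_congr rfl fun l _ => this l]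
      simp
    have e1 : ∑ l, (∑ i, ginv n g q.1 i l * vert n g q S i) * g q.1 l m
        = vert n g q S m := by
      have t : ∀ l : Fin n, (∑ i, ginv n g q.1 i l * vert n g q S i) * g q.1 l m
          = ∑ i, vert n g q S i * (ginv n g q.1 i l * g q.1 l m) := by
        intro l
        rw [Finset.sum_mul]
        exact Finset.sum_congr rfl fun i _ => by ring
      rw [Finset.sum_congr rfl fun l _ => t l, swap_sum]
      have t2 : ∀ i : Fin n, ∑ l, vert n g q S i * (ginv n g q.1 i l * g q.1 l m)
          = vert n g q S i * (if i = m then (1:ℝ) else 0) := by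
        intro i
        rw [← Finset.mul_sum, ginv_mul_g hgpos q.1 i m]
      rw [Finset.sum_congr rfl fun i _ => t2 i, sum_delta_right]
    have e2 : ∑ l, (∑ j, ginv n g q.1 l j * q.2 j) * g q.1 l m = q.2 m := by
      have t : ∀ l : Fin n, (∑ j, ginv n g q.1 l j * q.2 j) * g q.1 l m
          = ∑ j, q.2 j * (ginv n g q.1 j l * g q.1 l m) := by
        intro l
        rw [Finset.sum_mul]
        exact Finset.sum_congr rfl fun j _ => by rw [ginv_symm hgsymm q.1 l j]; ring
      rw [Finset.sum_congr rfl fun l _ => t l, swap_sum]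
      have t2 : ∀ j : Fin n, ∑ l, q.2 j * (ginv n g q.1 j l * g q.1 l m)
          = q.2 j * (if j = m then (1:ℝ) else 0) := by
        intro j
        rw [← Finset.mul_sum, ginv_mul_g hgpos q.1 j m]
      rw [Finset.sum_congr rfl fun j _ => t2 j, sum_delta_right]
    have hsplit : ∑ l, ((∑ i, ginv n g q.1 i l * vert n g q S i)
        + c * (∑ j, ginv n g q.1 l j * q.2 j)) * g q.1 l m
        = (∑ l, (∑ i, ginv n g q.1 i l * vert n g q S i) * g q.1 l m)
          + c * ∑ l, (∑ j, ginv n g q.1 l j * q.2 j) * g q.1 l m := by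
      rw [Finset.mul_sum, ← Finset.sum_add_distrib]
      exact Finset.sum_congr rfl fun l _ => by ring
    rw [hsplit, e1, e2] at hzero
    exact hzero
  have hc0 : c * alpha n g q = 0 := by
    have hsub : ∀ i : Fin n, vert n g q S i = -(c * q.2 i) := by
      intro i
      have := hvm i
      linarith
    have hcc : c = -c * ∑ i, ∑ j, ginv n g q.1 i j * q.2 i * q.2 j := by
      conv_lhs => rw [hc]
      calc ∑ i, ∑ j, ginv n g q.1 i j * vert n g q S i * q.2 j
          = ∑ i, ∑ j, -c * (ginv n g q.1 i j * q.2 i * q.2 j) := by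
            refine Finset.sum_congr rfl fun i _ => Finset.sum_congr rfl fun j _ => ?_
            rw [hsub i]
            ring
        _ = -c * ∑ i, ∑ j, ginv n g q.1 i j * q.2 i * q.2 j := by
            rw [Finset.mul_sum]
            exact Finset.sum_congr rfl fun i _ => by rw [Finset.mul_sum]
    have ea : alpha n g q = 1 + ∑ i, ∑ j, ginv n g q.1 i j * q.2 i * q.2 j := rfl
    rw [ea]
    nlinarith [hcc]
  have hcz : c = 0 := by
    rcases mul_eq_zero.mp hc0 with h' | h'
    · exact h'
    · exact absurd h' (alpha_pos hgpos q).ne'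
  have := hvm h
  rw [hcz] at this
  linarith

private lemma case_vertical (hg : ContDiff ℝ (⊤ : ℕ∞) g)
    (hgsymm : ∀ x i j, g x i j = g x j i) (hgpos : ∀ x, (Matrix.of (g x)).PosDef)
    (hfpos : ∀ x, 0 < f x)
    {D : VectorField n → VectorField n → VectorField n}
    (hD : IsLeviCivita n (CGmetric n g f) D)
    {ω θ : (Fin n → ℝ) → Fin n → ℝ} (hω : ContDiff ℝ (⊤ : ℕ∞) ω)
    (hθ : ContDiff ℝ (⊤ : ℕ∞) θ) (q : Pt n) :
    (D (VLift n ω) (VLift n θ) q + D (VLift n θ) (VLift n ω) q).1 = 0 := by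
  set S := D (VLift n ω) (VLift n θ) q + D (VLift n θ) (VLift n ω) q with hS
  have main : ∀ l : Fin n,
      CGmetric n g f q S (HLift n g (fun _ => Pi.single l 1) q) = 0 := by
    intro l
    have hZ : ContDiff ℝ (⊤ : ℕ∞) (HLift n g (fun _ : Fin n → ℝ => Pi.single l (1:ℝ))) :=
      cd_hlift hg hgpos contDiff_const
    have K := koszul hgsymm hD (VLift n ω) (VLift n θ)
      (HLift n g (fun _ => Pi.single l 1)) (cd_vlift hω) (cd_vlift hθ) hZ q
    rw [hS, CG_add_left, K]
    have R1 : fderiv ℝ (fun q' => CGmetric n g f q' (VLift n θ q')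
        (HLift n g (fun _ => Pi.single l 1) q')) q (VLift n ω q) = 0 := by
      have hfun : (fun q' => CGmetric n g f q' (VLift n θ q')
          (HLift n g (fun _ => Pi.single l 1) q')) = fun _ : Pt n => (0:ℝ) := by
        funext q'
        exact CG_vlift_hlift θ _ q'
      rw [hfun, fderiv_fun_const]
      simp
    have R2 : fderiv ℝ (fun q' => CGmetric n g f q' (VLift n ω q')
        (HLift n g (fun _ => Pi.single l 1) q')) q (VLift n θ q) = 0 := by
      have hfun : (fun q' => CGmetric n g f q' (VLift n ω q')
          (HLift n g (fun _ => Pi.single l 1) q')) = fun _ : Pt n => (0:ℝ) := by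
        funext q'
        exact CG_vlift_hlift ω _ q'
      rw [hfun, fderiv_fun_const]
      simp
    have R3 := dCG_vv (f := f) hg hgsymm hgpos hω hθ q l
    have R4 : CGmetric n g f q (VLift n θ q)
        (bracket n (VLift n ω) (HLift n g (fun _ => Pi.single l 1)) q)
        = -((1 / alpha n g q) * (QF g q.1 (θ q.1) (nab g q.1 l ω)
            + QF g q.1 (θ q.1) q.2 * QF g q.1 (nab g q.1 l ω) q.2)) := by
      rw [bracket_vh hg hgpos hω q l,
        show VLift n θ q = ((0 : Fin n → ℝ), θ q.1) from rfl, CG_vert_pair,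
        QF_neg_right, QF_neg_left]
      ring
    have R5 : CGmetric n g f q (VLift n ω q)
        (bracket n (VLift n θ) (HLift n g (fun _ => Pi.single l 1)) q)
        = -((1 / alpha n g q) * (QF g q.1 (ω q.1) (nab g q.1 l θ)
            + QF g q.1 (ω q.1) q.2 * QF g q.1 (nab g q.1 l θ) q.2)) := by
      rw [bracket_vh hg hgpos hθ q l,
        show VLift n ω q = ((0 : Fin n → ℝ), ω q.1) from rfl, CG_vert_pair,
        QF_neg_right, QF_neg_left]
      ring
    rw [R1, R2, R3, R4, R5]
    have symm1 : QF g q.1 (θ q.1) (nab g q.1 l ω) = QF g q.1 (nab g q.1 l ω) (θ q.1) :=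
      QF_symm hgsymm q.1 _ _
    rw [symm1]
    ring
  have hl : ∀ l : Fin n, ∑ i, g q.1 i l * S.1 i = 0 := by
    intro l
    have hm := main l
    rw [CG_S_hsingle] at hm
    rcases mul_eq_zero.mp hm with h' | h'
    · exact absurd h' (hfpos q.1).ne'
    · exact h'
  have hl' : ∀ l : Fin n, ∑ i, g q.1 l i * S.1 i = 0 := by
    intro l
    rw [← hl l]
    exact Finset.sum_congr rfl fun i _ => by rw [hgsymm q.1 l i]
  exact posdef_cancel hgpos q.1 S.1 hl'

end Main

/-- **Corollary.** Both distributions (horizontal and vertical, the `±1`-eigendistributions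
of `J`) of the almost product Riemannian manifold `(T*M, J, ^{CG}g_f)` are totally
geodesic: the second fundamental form of each distribution, i.e. the complementary part of
the symmetrized covariant derivative of sections, vanishes. -/
theorem distributions_totally_geodesic {n : ℕ} (g : (Fin n → ℝ) → Fin n → Fin n → ℝ)
    (hg : ContDiff ℝ (⊤ : ℕ∞) g)
    (hgsymm : ∀ x i j, g x i j = g x j i)
    (hgpos : ∀ x, (Matrix.of (g x)).PosDef)
    (f : (Fin n → ℝ) → ℝ) (hf : ContDiff ℝ (⊤ : ℕ∞) f) (hfpos : ∀ x, 0 < f x)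
    (D : VectorField n → VectorField n → VectorField n)
    (hD : IsLeviCivita n (CGmetric n g f) D) :
    (∀ X Y : (Fin n → ℝ) → Fin n → ℝ, ContDiff ℝ (⊤ : ℕ∞) X → ContDiff ℝ (⊤ : ℕ∞) Y → ∀ (q : Pt n) (h : Fin n),
        vert n g q (D (HLift n g X) (HLift n g Y) q + D (HLift n g Y) (HLift n g X) q) h = 0)
    ∧ (∀ ω θ : (Fin n → ℝ) → Fin n → ℝ, ContDiff ℝ (⊤ : ℕ∞) ω → ContDiff ℝ (⊤ : ℕ∞) θ → ∀ q : Pt n,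
        (D (VLift n ω) (VLift n θ) q + D (VLift n θ) (VLift n ω) q).1 = 0) := by
  constructor
  · intro X Y hX hY q h
    exact case_horizontal hg hgsymm hgpos hf hD hX hY q h
  · intro ω θ hω hθ q
    exact case_vertical hg hgsymm hgpos hfpos hD hω hθ q

end

end CGCot
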